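/- arXiv:math/0202089 — 5 statements merged into one kernel-verified Lean document; each statement's English description precedes it below -/
import Mathlib

section
/- Let p be a prime and α > 0, and equip the field ℚ_p of p-adic numbers with the metric d_α(x,y) = |x−y|_p^α (this is a metric by ultrametricity of |·|_p). Then the (1/α)-dimensional Hausdorff measure h^{1/α} on (ℚ_p, d_α) is a translation-invariant Borel-regular measure with h^{1/α}(ℤ_p) = 1, hence it coincides with the Haar measure χ on the additive group ℚ_p normalized by χ(ℤ_p) = 1; consequently the Hausdorff dimension of (ℚ_p, d_α) (and of every ball in it) equals 1/α. -/
open scoped ENNReal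

noncomputable section

/-- A pseudometric on `M`. -/
structure IsPseudoMetric {M : Type*} (ρ : M → M → ℝ) : Prop where
  nonneg : ∀ x y, 0 ≤ ρ x y
  refl : ∀ x, ρ x x = 0
  symm : ∀ x y, ρ x y = ρ y x
  triangle : ∀ x y z, ρ x z ≤ ρ x y + ρ y z

/-- A metric on `M`. -/
structure IsMetric {M : Type*} (ρ : M → M → ℝ) extends IsPseudoMetric ρ : Prop where
  eq_of_eq_zero : ∀ x y, ρ x y = 0 → x = y

/-- The diameter of a set w.r.t. a (pseudo)metric `ρ`, valued in `ℝ≥0∞`. -/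
def ediam {M : Type*} (ρ : M → M → ℝ) (S : Set M) : ℝ≥0∞ :=
  ⨆ x ∈ S, ⨆ y ∈ S, ENNReal.ofReal (ρ x y)

/-- The `δ`-dimensional Hausdorff outer measure of `A` w.r.t. the (pseudo)metric `ρ`:
`h^δ(A) = lim_{ε→0⁺} inf{ Σᵢ diam(Sᵢ)^δ : A ⊆ ⋃ᵢ Sᵢ, diam(Sᵢ) ≤ ε }` (the limit over
`ε → 0⁺` of the monotone quantity being its supremum over `ε > 0`). -/
def hMeas {M : Type*} (ρ : M → M → ℝ) (δ : ℝ) (A : Set M) : ℝ≥0∞ :=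
  ⨆ (ε : ℝ≥0∞) (_ : 0 < ε), ⨅ (S : ℕ → Set M) (_ : A ⊆ ⋃ i, S i)
    (_ : ∀ i, ediam ρ (S i) ≤ ε), ∑' i, ediam ρ (S i) ^ δ

/-- The Hausdorff dimension `D_h(A) = inf{δ > 0 : h^δ(A) = 0}` (valued in `ℝ≥0∞`,
with `∞` if no such `δ` exists). -/
def hDim {M : Type*} (ρ : M → M → ℝ) (A : Set M) : ℝ≥0∞ :=
  ⨅ (δ : ℝ) (_ : 0 < δ) (_ : hMeas ρ δ A = 0), ENNReal.ofReal δ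

/-- The divergence of two pseudometrics:
`κ = sup_{x,y} |ρ₁(x,y) − ρ₂(x,y)| / (ρ₁(x,y) + ρ₂(x,y))` (with `0/0 = 0`, which is
Lean's convention for division). -/
def divergence {M : Type*} (ρ₁ ρ₂ : M → M → ℝ) : ℝ :=
  ⨆ q : M × M, |ρ₁ q.1 q.2 - ρ₂ q.1 q.2| / (ρ₁ q.1 q.2 + ρ₂ q.1 q.2)

/-- The metric `d_α(x,y) = |x−y|_p^α` on `ℚ_p`. -/
def rhoQ (p : ℕ) [Fact p.Prime] (α : ℝ) : ℚ_[p] → ℚ_[p] → ℝ :=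
  fun x y => ‖x - y‖ ^ α

open scoped NNReal
open MeasureTheory Set Filter
set_option linter.unusedSectionVars false
set_option linter.unusedVariables false

namespace PadicHaarAux

variable (p : ℕ) [hp : Fact p.Prime]

/-- The closed ball `{x : ‖x‖ ≤ p^m}` in `ℚ_p`. -/
def zb (m : ℤ) : Set ℚ_[p] := {x : ℚ_[p] | ‖x‖ ≤ (p : ℝ) ^ m}

lemma one_lt_p : (1 : ℝ) < p := by exact_mod_cast hp.out.one_lt

lemma p_pos : (0 : ℝ) < p := lt_trans one_pos (one_lt_p p)

lemma isClosed_zb (m : ℤ) : IsClosed (zb p m) :=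
  isClosed_le continuous_norm continuous_const

lemma diam_zb_le (m : ℤ) : EMetric.diam (zb p m) ≤ ENNReal.ofReal ((p : ℝ) ^ m) := by
  apply EMetric.diam_le
  intro x hx y hy
  rw [edist_dist, dist_eq_norm]
  apply ENNReal.ofReal_le_ofReal
  calc ‖x - y‖ = ‖x + (-y)‖ := by ring_nf
    _ ≤ max ‖x‖ ‖-y‖ := Padic.nonarchimedean _ _
    _ ≤ (p : ℝ) ^ m := by
        rw [norm_neg]
        exact max_le hx hy

lemma translate_isometry (c : ℚ_[p]) : Isometry (fun y : ℚ_[p] => c + y) :=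
  Isometry.of_dist_eq fun a b => by
    simp only [dist_eq_norm, add_sub_add_left_eq_sub]

lemma image_translate (c : ℚ_[p]) (S : Set ℚ_[p]) :
    (fun y => c + y) '' S = (fun y => -c + y) ⁻¹' S := by
  ext x
  constructor
  · rintro ⟨y, hy, rfl⟩
    simpa using hy
  · intro hx
    exact ⟨-c + x, hx, by ring⟩

/-- `zb p m` is covered by `p^l` translates of `zb p (m - l)`. -/
lemma cover (m : ℤ) (l : ℕ) :
    zb p m ⊆
      ⋃ i : Fin (p ^ l),
        (fun y => (i : ℚ_[p]) * (p : ℚ_[p]) ^ (-m) + y) '' zb p (m - l) := by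
  intro x hx
  have hp0 : (p : ℚ_[p]) ≠ 0 := by
    exact_mod_cast Nat.cast_ne_zero.2 hp.out.ne_zero
  have hun : ‖x * (p : ℚ_[p]) ^ m‖ ≤ 1 := by
    rw [norm_mul, Padic.norm_p_zpow]
    calc ‖x‖ * (p : ℝ) ^ (-m) ≤ (p : ℝ) ^ m * (p : ℝ) ^ (-m) := by
          apply mul_le_mul_of_nonneg_right hx (zpow_nonneg (p_pos p).le _)
      _ = 1 := by rw [← zpow_add₀ (p_pos p).ne', add_neg_cancel, zpow_zero]
  set U : ℤ_[p] := ⟨x * (p : ℚ_[p]) ^ m, hun⟩ with hU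
  set i := U.appr l with hi
  refine mem_iUnion.2 ⟨⟨i, U.appr_lt _⟩, ?_⟩
  have hspec : ‖U - (i : ℤ_[p])‖ ≤ (p : ℝ) ^ (-(l : ℕ) : ℤ) :=
    (PadicInt.norm_le_pow_iff_mem_span_pow _ _).2 (U.appr_spec l)
  refine ⟨x - (i : ℚ_[p]) * (p : ℚ_[p]) ^ (-m), ?_, by ring⟩
  have hxu : x - (i : ℚ_[p]) * (p : ℚ_[p]) ^ (-m)
      = ((U : ℚ_[p]) - (i : ℚ_[p])) * (p : ℚ_[p]) ^ (-m) := by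
    rw [hU]
    push_cast
    rw [sub_mul, mul_assoc, ← zpow_add₀ hp0, add_neg_cancel, zpow_zero, mul_one]
  show ‖_‖ ≤ _
  rw [hxu, norm_mul, Padic.norm_p_zpow, neg_neg]
  have hnorm : ‖(U : ℚ_[p]) - (i : ℚ_[p])‖ ≤ (p : ℝ) ^ (-(l : ℕ) : ℤ) := by
    have : ((U - (i : ℤ_[p]) : ℤ_[p]) : ℚ_[p]) = (U : ℚ_[p]) - (i : ℚ_[p]) := by push_cast; ring
    rw [← this, PadicInt.padic_norm_e_of_padicInt]
    exact hspec
  calc ‖(U : ℚ_[p]) - (i : ℚ_[p])‖ * (p : ℝ) ^ m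
      ≤ (p : ℝ) ^ (-(l : ℕ) : ℤ) * (p : ℝ) ^ m :=
        mul_le_mul_of_nonneg_right hnorm (zpow_nonneg (p_pos p).le _)
    _ = (p : ℝ) ^ (m - l) := by
        rw [← zpow_add₀ (p_pos p).ne']
        congr 1
        ring

/-- Each translate in the cover is inside the bigger ball. -/
lemma translate_subset (m : ℤ) (l : ℕ) (c : ℚ_[p]) (hc : ‖c‖ ≤ (p : ℝ) ^ m) :
    (fun y => c + y) '' zb p (m - l) ⊆ zb p m := by
  rintro _ ⟨y, hy, rfl⟩
  show ‖c + y‖ ≤ (p : ℝ) ^ m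
  refine le_trans (Padic.nonarchimedean _ _) (max_le hc (le_trans hy ?_))
  apply zpow_le_zpow_right₀ (one_lt_p p).le
  omega

lemma norm_c_le (m : ℤ) (i : ℕ) : ‖(i : ℚ_[p]) * (p : ℚ_[p]) ^ (-m)‖ ≤ (p : ℝ) ^ m := by
  rw [norm_mul, Padic.norm_p_zpow, neg_neg]
  have h1 : ‖(i : ℚ_[p])‖ ≤ 1 := by
    have := Padic.norm_int_le_one (p := p) (i : ℤ)
    simpa using this
  calc ‖(i : ℚ_[p])‖ * (p : ℝ) ^ m ≤ 1 * (p : ℝ) ^ m :=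
        mul_le_mul_of_nonneg_right h1 (zpow_nonneg (p_pos p).le _)
    _ = (p : ℝ) ^ m := one_mul _

lemma norm_sub_nat_cast (i j : ℕ) (hi : i < p) (hj : j < p) (hij : i ≠ j) :
    ‖(i : ℚ_[p]) - (j : ℚ_[p])‖ = 1 := by
  have hcast : (i : ℚ_[p]) - (j : ℚ_[p]) = (((i : ℤ) - (j : ℤ) : ℤ) : ℚ_[p]) := by push_cast; ring
  rw [hcast]
  refine le_antisymm (Padic.norm_int_le_one _) ?_
  by_contra hlt
  push_neg at hlt
  have hdvd : (p : ℤ) ∣ (i : ℤ) - (j : ℤ) := Padic.norm_intCast_lt_one_iff.1 hlt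
  have hne : (i : ℤ) - (j : ℤ) ≠ 0 := by
    intro h
    exact hij (by omega)
  have habs : |(i : ℤ) - (j : ℤ)| < p := by
    rw [abs_lt]
    omega
  have := Int.le_of_dvd (abs_pos.2 hne) ((dvd_abs _ _).2 hdvd)
  omega

/-- The `p` translates of `zb p (m-1)` partitioning `zb p m` are pairwise disjoint. -/
lemma cover_disjoint (m : ℤ) :
    Pairwise (Function.onFun Disjoint
      (fun i : Fin (p ^ 1) => (fun y => (i : ℚ_[p]) * (p : ℚ_[p]) ^ (-m) + y) '' zb p (m - 1))) := by
  intro i j hij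
  simp only [Function.onFun]
  rw [Set.disjoint_left]
  rintro z ⟨y, hy, hz⟩ ⟨y', hy', hz'⟩
  have hip : (i : ℕ) < p := by simpa using i.isLt
  have hjp : (j : ℕ) < p := by simpa using j.isLt
  have key : ((i : ℚ_[p]) - (j : ℚ_[p])) * (p : ℚ_[p]) ^ (-m) = y' - y := by
    have := hz.trans hz'.symm
    linear_combination this
  have hnorm1 : ‖((i : ℚ_[p]) - (j : ℚ_[p])) * (p : ℚ_[p]) ^ (-m)‖ = (p : ℝ) ^ m := by
    rw [norm_mul, Padic.norm_p_zpow, neg_neg,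
      norm_sub_nat_cast p i j (by omega) (by omega) (fun h => hij (Fin.ext h)), one_mul]
  have hnorm2 : ‖y' - y‖ ≤ (p : ℝ) ^ (m - 1) := by
    calc ‖y' - y‖ = ‖y' + (-y)‖ := by ring_nf
      _ ≤ max ‖y'‖ ‖-y‖ := Padic.nonarchimedean _ _
      _ ≤ (p : ℝ) ^ (m - 1) := by rw [norm_neg]; exact max_le hy' hy
  rw [← key, hnorm1] at hnorm2
  have : (m : ℤ) ≤ m - 1 := (zpow_le_zpow_iff_right₀ (one_lt_p p)).1 hnorm2
  omega

section Haar

variable [MeasurableSpace ℚ_[p]] [BorelSpace ℚ_[p]]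
variable (χ : Measure ℚ_[p]) [χ.IsAddHaarMeasure]

lemma chi_translate (c : ℚ_[p]) (S : Set ℚ_[p]) :
    χ ((fun y => c + y) '' S) = χ S := by
  rw [image_translate, measure_preimage_add]

lemma measurable_translate_zb (c : ℚ_[p]) (m : ℤ) :
    MeasurableSet ((fun y => c + y) '' zb p m) := by
  rw [image_translate]
  exact (isClosed_zb p m).measurableSet.preimage (measurable_const_add _)

lemma chi_zb_step (m : ℤ) :
    χ (zb p m) = (p : ℝ≥0∞) * χ (zb p (m - 1)) := by
  have hpart : zb p m = ⋃ i : Fin (p ^ 1),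
      (fun y => (i : ℚ_[p]) * (p : ℚ_[p]) ^ (-m) + y) '' zb p (m - 1) := by
    refine subset_antisymm (cover p m 1) (iUnion_subset fun i => ?_)
    exact translate_subset p m 1 _ (norm_c_le p m i)
  rw [hpart, measure_iUnion (cover_disjoint p m) (fun i => measurable_translate_zb p _ _)]
  have : ∀ i : Fin (p ^ 1),
      χ ((fun y => (i : ℚ_[p]) * (p : ℚ_[p]) ^ (-m) + y) '' zb p (m - 1)) = χ (zb p (m - 1)) :=
    fun i => chi_translate p χ _ _
  rw [tsum_congr this, tsum_fintype]
  simp [Finset.sum_const, nsmul_eq_mul, pow_one]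

lemma chi_zb_neg (hχ : χ (zb p 0) = 1) (n : ℕ) :
    χ (zb p (-(n : ℤ))) = ENNReal.ofReal ((p : ℝ) ^ (-(n : ℤ))) := by
  induction n with
  | zero => simpa using hχ
  | succ n ih =>
    have hstep := chi_zb_step p χ (-(n : ℤ))
    rw [ih] at hstep
    have harith : (-(n : ℤ)) - 1 = -((n + 1 : ℕ) : ℤ) := by push_cast; ring
    rw [harith] at hstep
    have hcancel : (p : ℝ≥0∞) * χ (zb p (-((n + 1 : ℕ) : ℤ)))
        = (p : ℝ≥0∞) * ENNReal.ofReal ((p : ℝ) ^ (-((n + 1 : ℕ) : ℤ))) := by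
      rw [← hstep]
      have : (p : ℝ≥0∞) = ENNReal.ofReal (p : ℝ) := by
        simp [ENNReal.ofReal_natCast]
      rw [this, ← ENNReal.ofReal_mul (p_pos p).le]
      congr 1
      have harith2 : -(n : ℤ) = (-((n + 1 : ℕ) : ℤ)) + 1 := by push_cast; ring
      rw [harith2, zpow_add_one₀ (p_pos p).ne', mul_comm]
    exact (ENNReal.mul_right_inj (by simp [hp.out.ne_zero]) (by simp)).1 hcancel

lemma tendsto_pow_zero :
    Tendsto (fun n : ℕ => ENNReal.ofReal ((p : ℝ) ^ (-(n : ℤ)))) atTop (nhds 0) := by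
  have heq : ∀ n : ℕ, ENNReal.ofReal ((p : ℝ) ^ (-(n : ℤ)))
      = ENNReal.ofReal ((p : ℝ)⁻¹) ^ n := by
    intro n
    rw [← ENNReal.ofReal_pow (by positivity)]
    congr 1
    rw [zpow_neg, zpow_natCast, inv_pow]
  simp only [heq]
  apply ENNReal.tendsto_pow_atTop_nhds_zero_of_lt_one
  rw [ENNReal.ofReal_lt_one]
  exact inv_lt_one_of_one_lt₀ (one_lt_p p)

lemma chi_singleton (hχ : χ (zb p 0) = 1) (x : ℚ_[p]) : χ {x} = 0 := by
  have hle : ∀ n : ℕ, χ {x} ≤ ENNReal.ofReal ((p : ℝ) ^ (-(n : ℤ))) := by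
    intro n
    rw [← chi_zb_neg p χ hχ n, ← chi_translate p χ x (zb p (-(n : ℤ)))]
    apply measure_mono
    rintro _ rfl
    exact ⟨0, by simp [zb, zpow_nonneg (p_pos p).le], by simp⟩
  exact le_antisymm (ge_of_tendsto' (tendsto_pow_zero p) hle) zero_le

/-- Key estimate: Haar measure of a set is at most its diameter (for small sets). -/
lemma chi_le_diam (hχ : χ (zb p 0) = 1) (S : Set ℚ_[p]) (hS : EMetric.diam S ≤ 1) :
    χ S ≤ EMetric.diam S := by
  rcases S.eq_empty_or_nonempty with rfl | ⟨x₀, hx₀⟩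
  · simp
  have hDne : EMetric.diam S ≠ ⊤ := (lt_of_le_of_lt hS (by simp)).ne
  set d : ℝ := (EMetric.diam S).toReal with hd
  have hDd : EMetric.diam S = ENNReal.ofReal d := (ENNReal.ofReal_toReal hDne).symm
  have hd1 : d ≤ 1 := by
    rw [hd]
    exact ENNReal.toReal_le_of_le_ofReal zero_le_one (by simpa using hS)
  rcases eq_or_lt_of_le (ENNReal.toReal_nonneg : (0:ℝ) ≤ d) with hd0 | hd0
  · have hD0 : EMetric.diam S = 0 := by rw [hDd, hd, ← hd0, ENNReal.ofReal_zero]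
    have hsub : S ⊆ {x₀} := fun y hy => (EMetric.diam_eq_zero_iff.1 hD0) hy hx₀
    calc χ S ≤ χ {x₀} := measure_mono hsub
      _ = 0 := chi_singleton p χ hχ x₀
      _ ≤ _ := zero_le
  · have hex : ∃ n : ℕ, (p : ℝ) ^ (-(n : ℤ)) ≤ d := by
      obtain ⟨n, hn⟩ := pow_unbounded_of_one_lt (1 / d) (one_lt_p p)
      refine ⟨n, le_of_lt ?_⟩
      have h2 : ((p : ℝ) ^ n)⁻¹ < d := by
        rw [inv_lt_comm₀ (pow_pos (p_pos p) n) hd0]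
        simpa [one_div] using hn
      simpa [zpow_neg, zpow_natCast] using h2
    set n₀ := Nat.find hex with hn₀def
    have hfind : (p : ℝ) ^ (-(n₀ : ℤ)) ≤ d := Nat.find_spec hex
    have hsub : S ⊆ (fun y => x₀ + y) '' zb p (-(n₀ : ℤ)) := by
      intro y hy
      refine ⟨y - x₀, ?_, by ring⟩
      show ‖y - x₀‖ ≤ (p : ℝ) ^ (-(n₀ : ℤ))
      have hyd : ‖y - x₀‖ ≤ d := by
        have h1 : edist y x₀ ≤ EMetric.diam S := EMetric.edist_le_diam_of_mem hy hx₀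
        rw [hDd, edist_dist] at h1
        have h2 := (ENNReal.ofReal_le_ofReal_iff (le_of_lt hd0)).1 h1
        simpa [dist_eq_norm] using h2
      by_cases h0 : y - x₀ = 0
      · rw [h0, norm_zero]
        exact zpow_nonneg (p_pos p).le _
      · rw [Padic.norm_eq_zpow_neg_valuation h0] at hyd ⊢
        rw [zpow_le_zpow_iff_right₀ (one_lt_p p)]
        by_contra hcon
        push_neg at hcon
        cases hcase : n₀ with
        | zero =>
          rw [hcase] at hcon
          have hv1 : (1 : ℤ) ≤ -(y - x₀).valuation := by
            push_cast at hcon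
            omega
          have : (p : ℝ) ^ (1 : ℤ) ≤ (p : ℝ) ^ (-(y - x₀).valuation) :=
            (zpow_le_zpow_iff_right₀ (one_lt_p p)).2 hv1
          rw [zpow_one] at this
          have := this.trans (hyd.trans hd1)
          linarith [one_lt_p p]
        | succ m =>
          have hmin : ¬ ((p : ℝ) ^ (-(m : ℤ)) ≤ d) := Nat.find_min hex (by omega)
          push_neg at hmin
          rw [hcase] at hcon
          have hvm : (-(m : ℤ)) ≤ -(y - x₀).valuation := by
            push_cast at hcon ⊢
            omega
          have : (p : ℝ) ^ (-(m : ℤ)) ≤ (p : ℝ) ^ (-(y - x₀).valuation) :=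
            (zpow_le_zpow_iff_right₀ (one_lt_p p)).2 hvm
          linarith
    calc χ S ≤ χ ((fun y => x₀ + y) '' zb p (-(n₀ : ℤ))) := measure_mono hsub
      _ = χ (zb p (-(n₀ : ℤ))) := chi_translate p χ _ _
      _ = ENNReal.ofReal ((p : ℝ) ^ (-(n₀ : ℤ))) := chi_zb_neg p χ hχ n₀
      _ ≤ ENNReal.ofReal d := ENNReal.ofReal_le_ofReal hfind
      _ = EMetric.diam S := hDd.symm

lemma chi_le_hausdorff (hχ : χ (zb p 0) = 1) {d : ℝ} (hd0 : 0 < d) (hd1 : d ≤ 1) :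
    χ ≤ μH[d] := by
  refine Measure.le_hausdorffMeasure d χ 1 one_pos (fun s hs => ?_)
  calc χ s ≤ EMetric.diam s := chi_le_diam p χ hχ s hs
    _ = EMetric.diam s ^ (1 : ℝ) := (ENNReal.rpow_one _).symm
    _ ≤ EMetric.diam s ^ d := ENNReal.rpow_le_rpow_of_exponent_ge hs hd1

end Haar

section HM

variable [MeasurableSpace ℚ_[p]] [BorelSpace ℚ_[p]]

lemma hausdorff_translate (d : ℝ) (hd : 0 ≤ d) (c : ℚ_[p]) (A : Set ℚ_[p]) :
    μH[d] ((fun y => c + y) '' A) = μH[d] A :=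
  (translate_isometry p c).hausdorffMeasure_image (Or.inl hd) A

lemma r_tendsto_zero :
    Tendsto (fun n : ℕ => ENNReal.ofReal ((p : ℝ) ^ (-(n : ℤ)))) atTop (nhds 0) := by
  have heq : ∀ n : ℕ, ENNReal.ofReal ((p : ℝ) ^ (-(n : ℤ)))
      = ENNReal.ofReal ((p : ℝ)⁻¹) ^ n := by
    intro n
    rw [← ENNReal.ofReal_pow (by positivity)]
    congr 1
    rw [zpow_neg, zpow_natCast, inv_pow]
  simp only [heq]
  apply ENNReal.tendsto_pow_atTop_nhds_zero_of_lt_one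
  rw [ENNReal.ofReal_lt_one]
  exact inv_lt_one_of_one_lt₀ (one_lt_p p)

lemma hausdorff_zb_bound (k : ℕ) (d : ℝ) (hd : 0 < d) :
    μH[d] (zb p (k : ℤ)) ≤
      liminf (fun n : ℕ => ENNReal.ofReal ((p : ℝ) ^ (k : ℕ) * ((p : ℝ) ^ (1 - d)) ^ n))
        atTop := by
  have hdiam : ∀ (n : ℕ) (i : Fin (p ^ (n + k))),
      EMetric.diam ((fun y => (i : ℚ_[p]) * (p : ℚ_[p]) ^ (-(k : ℤ)) + y) '' zb p (-(n : ℤ)))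
        ≤ ENNReal.ofReal ((p : ℝ) ^ (-(n : ℤ))) := by
    intro n i
    show Metric.ediam _ ≤ _
    rw [(translate_isometry p _).ediam_image]
    exact diam_zb_le p _
  have key := MeasureTheory.Measure.hausdorffMeasure_le_liminf_sum
    (ι := fun n : ℕ => Fin (p ^ (n + k))) d (zb p (k : ℤ))
    (fun n : ℕ => ENNReal.ofReal ((p : ℝ) ^ (-(n : ℤ)))) (r_tendsto_zero p)
    (fun n i => (fun y => (i : ℚ_[p]) * (p : ℚ_[p]) ^ (-(k : ℤ)) + y) '' zb p (-(n : ℤ)))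
    (Eventually.of_forall fun n => hdiam n)
    (Eventually.of_forall fun n => by
      have h := cover p (k : ℤ) (n + k)
      rw [show (k : ℤ) - ((n + k : ℕ) : ℤ) = -(n : ℤ) by push_cast; ring] at h
      exact h)
  refine le_trans key (Filter.liminf_le_liminf (Eventually.of_forall fun n => ?_))
  refine le_trans (Finset.sum_le_sum fun i _ => ENNReal.rpow_le_rpow (hdiam n i) hd.le) ?_
  rw [Finset.sum_const, Finset.card_univ, Fintype.card_fin, nsmul_eq_mul,
    ENNReal.ofReal_rpow_of_nonneg (zpow_nonneg (p_pos p).le _) hd.le,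
    ← ENNReal.ofReal_natCast, ← ENNReal.ofReal_mul (by positivity)]
  apply le_of_eq
  congr 1
  have hp0 : (0 : ℝ) < p := p_pos p
  rw [Nat.cast_pow]
  rw [← Real.rpow_natCast (p : ℝ) (n + k), ← Real.rpow_natCast (p : ℝ) k,
    ← Real.rpow_intCast (p : ℝ) (-(n : ℤ)), ← Real.rpow_natCast ((p : ℝ) ^ (1 - d)) n,
    ← Real.rpow_mul hp0.le, ← Real.rpow_mul hp0.le,
    ← Real.rpow_add hp0, ← Real.rpow_add hp0]
  congr 1
  push_cast
  ring

lemma hausdorff_zb_one (k : ℕ) :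
    μH[(1 : ℝ)] (zb p (k : ℤ)) ≤ ENNReal.ofReal ((p : ℝ) ^ (k : ℕ)) := by
  have h := hausdorff_zb_bound p k 1 one_pos
  simpa [liminf_const] using h

lemma hausdorff_zb_zero (k : ℕ) {d : ℝ} (hd : 1 < d) : μH[d] (zb p (k : ℤ)) = 0 := by
  have hq1 : (p : ℝ) ^ (1 - d) < 1 :=
    Real.rpow_lt_one_of_one_lt_of_neg (one_lt_p p) (by linarith)
  have hq0 : (0 : ℝ) ≤ (p : ℝ) ^ (1 - d) := Real.rpow_nonneg (p_pos p).le _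
  have htend : Tendsto
      (fun n : ℕ => ENNReal.ofReal ((p : ℝ) ^ (k : ℕ) * ((p : ℝ) ^ (1 - d)) ^ n))
      atTop (nhds 0) := by
    have hreal : Tendsto (fun n : ℕ => (p : ℝ) ^ (k : ℕ) * ((p : ℝ) ^ (1 - d)) ^ n)
        atTop (nhds 0) := by
      have h := tendsto_pow_atTop_nhds_zero_of_lt_one hq0 hq1
      simpa using h.const_mul ((p : ℝ) ^ (k : ℕ))
    have h2 := ENNReal.tendsto_ofReal hreal
    simpa using h2
  refine le_antisymm ?_ zero_le
  calc μH[d] (zb p (k : ℤ)) ≤ _ := hausdorff_zb_bound p k d (by linarith)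
    _ = 0 := htend.liminf_eq

lemma univ_eq_iUnion_zb : (univ : Set ℚ_[p]) = ⋃ k : ℕ, zb p (k : ℤ) := by
  ext x
  simp only [mem_univ, true_iff, mem_iUnion]
  obtain ⟨k, hk⟩ := pow_unbounded_of_one_lt ‖x‖ (one_lt_p p)
  exact ⟨k, by rw [zb, mem_setOf_eq, zpow_natCast]; exact hk.le⟩

lemma hausdorff_univ_zero {d : ℝ} (hd : 1 < d) : μH[d] (univ : Set ℚ_[p]) = 0 := by
  rw [univ_eq_iUnion_zb p]
  refine le_antisymm (le_trans (measure_iUnion_le _) ?_) zero_le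
  simp [hausdorff_zb_zero p _ hd]

lemma hausdorff_one_addLeftInvariant :
    (μH[(1 : ℝ)] : Measure ℚ_[p]).IsAddLeftInvariant := by
  constructor
  intro c
  ext s hs
  rw [Measure.map_apply (measurable_const_add c) hs]
  have hrange : Set.range (fun y : ℚ_[p] => c + y) = univ := by
    ext z
    simp only [mem_range, mem_univ, iff_true]
    exact ⟨z - c, by ring⟩
  calc μH[(1 : ℝ)] ((fun y => c + y) ⁻¹' s)
      = μH[(1 : ℝ)] (s ∩ Set.range (fun y : ℚ_[p] => c + y)) :=
        (translate_isometry p c).hausdorffMeasure_preimage (Or.inl zero_le_one) s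
    _ = μH[(1 : ℝ)] s := by rw [hrange, inter_univ]

lemma hausdorff_one_finiteOnCompacts :
    IsFiniteMeasureOnCompacts (μH[(1 : ℝ)] : Measure ℚ_[p]) := by
  constructor
  intro K hK
  obtain ⟨R, hR⟩ := hK.isBounded.subset_closedBall (0 : ℚ_[p])
  obtain ⟨k, hk⟩ := pow_unbounded_of_one_lt R (one_lt_p p)
  have hsub : K ⊆ zb p (k : ℤ) := by
    intro x hx
    have := hR hx
    rw [Metric.mem_closedBall, dist_zero_right] at this
    rw [zb, mem_setOf_eq, zpow_natCast]
    exact this.trans hk.le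
  calc μH[(1 : ℝ)] K ≤ μH[(1 : ℝ)] (zb p (k : ℤ)) := measure_mono hsub
    _ ≤ ENNReal.ofReal ((p : ℝ) ^ (k : ℕ)) := hausdorff_zb_one p k
    _ < ⊤ := ENNReal.ofReal_lt_top

lemma hausdorff_one_eq_chi (χ : Measure ℚ_[p]) [χ.IsAddHaarMeasure]
    (hχ : χ (zb p 0) = 1) : (μH[(1 : ℝ)] : Measure ℚ_[p]) = χ := by
  haveI := hausdorff_one_addLeftInvariant p
  haveI := hausdorff_one_finiteOnCompacts p
  have h := Measure.isAddLeftInvariant_eq_smul (μH[(1 : ℝ)] : Measure ℚ_[p]) χ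
  have hZp : (μH[(1 : ℝ)] : Measure ℚ_[p]) (zb p 0) = 1 := by
    refine le_antisymm ?_ ?_
    · have h1 := hausdorff_zb_one p 0
      simpa using h1
    · rw [← hχ]
      exact Measure.le_iff'.1 (chi_le_hausdorff p χ hχ one_pos le_rfl) (zb p 0)
  rw [h] at hZp
  simp only [Measure.smul_apply, hχ, smul_eq_mul, mul_one] at hZp
  have hc : (μH[(1 : ℝ)].addHaarScalarFactor χ) = 1 := by
    have : ((μH[(1 : ℝ)].addHaarScalarFactor χ : ℝ≥0) : ℝ≥0∞) = 1 := by
      simpa [ENNReal.smul_def] using hZp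
    exact_mod_cast this
  rw [h, hc, one_smul]

end HM


section Glue

variable (p : ℕ) [hp : Fact p.Prime]

lemma ediam_rhoQ (α : ℝ) (hα : 0 < α) (S : Set ℚ_[p]) :
    ediam (rhoQ p α) S = EMetric.diam S ^ α := by
  set e := ENNReal.orderIsoRpow α hα with he
  have hmap : ∀ x y : ℚ_[p], ENNReal.ofReal (rhoQ p α x y) = e (edist x y) := by
    intro x y
    show ENNReal.ofReal (‖x - y‖ ^ α) = edist x y ^ α
    rw [edist_dist, dist_eq_norm, ← ENNReal.ofReal_rpow_of_nonneg (norm_nonneg _) hα.le]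
  have hdiam : EMetric.diam S = ⨆ x ∈ S, ⨆ y ∈ S, edist x y := rfl
  have hgoal : ediam (rhoQ p α) S = e (EMetric.diam S) := by
    rw [ediam, hdiam]
    simp only [OrderIso.map_iSup, hmap]
  rw [hgoal]
  rfl

lemma rpow_pos_of_pos {ε : ℝ≥0∞} (hε : 0 < ε) {β : ℝ} (hβ : 0 < β) : 0 < ε ^ β := by
  rcases eq_or_ne ε ⊤ with rfl | hne
  · rw [ENNReal.top_rpow_of_pos hβ]
    exact ENNReal.zero_lt_top
  · exact ENNReal.rpow_pos hε hne

variable [MeasurableSpace ℚ_[p]] [BorelSpace ℚ_[p]]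

lemma hMeas_eq (α : ℝ) (hα : 0 < α) (δ : ℝ) (hδ : 0 < δ) (A : Set ℚ_[p]) :
    hMeas (rhoQ p α) δ A = μH[α * δ] A := by
  have hαδ : 0 < α * δ := mul_pos hα hδ
  have hsummand : ∀ S : Set ℚ_[p], ediam (rhoQ p α) S ^ δ
      = ⨆ _ : S.Nonempty, EMetric.diam S ^ (α * δ) := by
    intro S
    rw [ediam_rhoQ p α hα, ← ENNReal.rpow_mul]
    rcases S.eq_empty_or_nonempty with rfl | hS
    · simp [EMetric.diam, Metric.ediam_empty, ENNReal.zero_rpow_of_pos hαδ]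
    · rw [iSup_pos hS]
  have hconstraint : ∀ (S : Set ℚ_[p]) (ε : ℝ≥0∞),
      ediam (rhoQ p α) S ≤ ε ↔ EMetric.diam S ≤ ε ^ (α⁻¹ : ℝ) := by
    intro S ε
    rw [ediam_rhoQ p α hα]
    exact ⟨fun h => (ENNReal.le_rpow_inv_iff hα).2 h, fun h => (ENNReal.le_rpow_inv_iff hα).1 h⟩
  have hInf : ∀ ε : ℝ≥0∞,
      (⨅ (S : ℕ → Set ℚ_[p]) (_ : A ⊆ ⋃ i, S i)
        (_ : ∀ i, ediam (rhoQ p α) (S i) ≤ ε), ∑' i, ediam (rhoQ p α) (S i) ^ δ)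
      = ⨅ (t : ℕ → Set ℚ_[p]) (_ : A ⊆ ⋃ n, t n)
          (_ : ∀ n, EMetric.diam (t n) ≤ ε ^ (α⁻¹ : ℝ)),
          ∑' n, ⨆ _ : (t n).Nonempty, EMetric.diam (t n) ^ (α * δ) := by
    intro ε
    refine iInf_congr fun t => iInf_congr_Prop Iff.rfl fun _ => ?_
    refine iInf_congr_Prop (forall_congr' fun i => hconstraint (t i) ε) fun _ => ?_
    exact tsum_congr fun i => hsummand (t i)
  rw [MeasureTheory.Measure.hausdorffMeasure_apply]
  rw [hMeas]
  simp only [hInf]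
  apply le_antisymm
  · refine iSup₂_le fun ε hε => ?_
    exact le_iSup₂ (f := fun r (_ : 0 < r) =>
      ⨅ (t : ℕ → Set ℚ_[p]) (_ : A ⊆ ⋃ n, t n) (_ : ∀ n, EMetric.diam (t n) ≤ r),
        ∑' n, ⨆ _ : (t n).Nonempty, EMetric.diam (t n) ^ (α * δ))
      (ε ^ (α⁻¹ : ℝ)) (rpow_pos_of_pos hε (by positivity))
  · refine iSup₂_le fun r hr => ?_
    have hrw : (r ^ α) ^ (α⁻¹ : ℝ) = r := by
      rw [← ENNReal.rpow_mul, mul_inv_cancel₀ hα.ne', ENNReal.rpow_one]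
    have := le_iSup₂ (f := fun ε (_ : 0 < ε) =>
      ⨅ (t : ℕ → Set ℚ_[p]) (_ : A ⊆ ⋃ n, t n)
        (_ : ∀ n, EMetric.diam (t n) ≤ ε ^ (α⁻¹ : ℝ)),
        ∑' n, ⨆ _ : (t n).Nonempty, EMetric.diam (t n) ^ (α * δ))
      (r ^ α) (rpow_pos_of_pos hr hα)
    rw [hrw] at this
    exact this

end Glue

lemma hDim_eq_of_iff {M : Type*} (ρ : M → M → ℝ) (A : Set M) (c : ℝ) (hc : 0 < c)
    (H : ∀ δ : ℝ, 0 < δ → (hMeas ρ δ A = 0 ↔ c < δ)) :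
    hDim ρ A = ENNReal.ofReal c := by
  apply le_antisymm
  · refine ENNReal.le_of_forall_pos_le_add fun ε hε _ => ?_
    have hεR : (0 : ℝ) < (ε : ℝ) := hε
    have hδpos : (0 : ℝ) < c + ε := by linarith
    have h0 : hMeas ρ (c + ε) A = 0 := (H _ hδpos).2 (by linarith)
    have step : hDim ρ A ≤ ENNReal.ofReal (c + ε) := by
      rw [hDim]
      refine iInf_le_of_le (c + ε) ?_
      rw [iInf_pos hδpos, iInf_pos h0]
    refine le_trans step (le_of_eq ?_)
    rw [ENNReal.ofReal_add hc.le hεR.le, ENNReal.ofReal_coe_nnreal]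
  · refine le_iInf fun δ => le_iInf fun hδ => le_iInf fun h0 => ?_
    exact ENNReal.ofReal_le_ofReal (le_of_lt ((H δ hδ).1 h0))

end PadicHaarAux

open PadicHaarAux

/-- On `(ℚ_p, d_α)` the `(1/α)`-dimensional Hausdorff measure is translation invariant,
Borel regular, gives `ℤ_p` measure `1`, coincides on Borel sets with the Haar measure `χ`
normalized by `χ(ℤ_p) = 1`, and the Hausdorff dimension of `ℚ_p` and of every ball
equals `1/α`. -/
theorem padic_hausdorff_measure_eq_haar (p : ℕ) [Fact p.Prime] (α : ℝ) (hα : 0 < α)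
    [MeasurableSpace ℚ_[p]] [BorelSpace ℚ_[p]]
    (χ : MeasureTheory.Measure ℚ_[p]) [χ.IsAddHaarMeasure]
    (hχ : χ {x : ℚ_[p] | ‖x‖ ≤ 1} = 1) :
    (∀ (c : ℚ_[p]) (A : Set ℚ_[p]),
        hMeas (rhoQ p α) (1 / α) ((fun x => c + x) '' A) = hMeas (rhoQ p α) (1 / α) A) ∧
      (∀ A : Set ℚ_[p], ∃ B : Set ℚ_[p], MeasurableSet B ∧ A ⊆ B ∧
        hMeas (rhoQ p α) (1 / α) A = hMeas (rhoQ p α) (1 / α) B) ∧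
      hMeas (rhoQ p α) (1 / α) {x : ℚ_[p] | ‖x‖ ≤ 1} = 1 ∧
      (∀ B : Set ℚ_[p], MeasurableSet B → χ B = hMeas (rhoQ p α) (1 / α) B) ∧
      hDim (rhoQ p α) (Set.univ : Set ℚ_[p]) = ENNReal.ofReal (1 / α) ∧
      (∀ (x : ℚ_[p]) (r : ℝ), 0 < r →
        hDim (rhoQ p α) {y : ℚ_[p] | rhoQ p α x y < r} = ENNReal.ofReal (1 / α)) := by
  have hδ0 : (0 : ℝ) < 1 / α := by positivity
  have hZpSet : {x : ℚ_[p] | ‖x‖ ≤ 1} = zb p 0 := by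
    ext x
    simp [zb]
  have hχ0 : χ (zb p 0) = 1 := by rw [← hZpSet]; exact hχ
  have hone : α * (1 / α) = 1 := by field_simp
  have hMeasEq : ∀ A : Set ℚ_[p], hMeas (rhoQ p α) (1 / α) A = μH[(1 : ℝ)] A := by
    intro A
    have h := hMeas_eq p α hα (1 / α) hδ0 A
    rwa [hone] at h
  have hν := hausdorff_one_eq_chi p χ hχ0
  -- the iff characterizing vanishing of the Hausdorff measures, for sets between a ball and univ
  have hiff : ∀ (A : Set ℚ_[p]), MeasurableSet A → (χ A ≠ 0) →
      ∀ δ : ℝ, 0 < δ → (hMeas (rhoQ p α) δ A = 0 ↔ 1 / α < δ) := by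
    intro A hAmeas hApos δ hδpos
    rw [hMeas_eq p α hα δ hδpos]
    constructor
    · intro h0
      by_contra hle
      push_neg at hle
      have hαδ : α * δ ≤ 1 := by
        calc α * δ ≤ α * (1 / α) := mul_le_mul_of_nonneg_left hle hα.le
          _ = 1 := hone
      have hle2 := Measure.le_iff'.1
        (chi_le_hausdorff p χ hχ0 (mul_pos hα hδpos) hαδ) A
      rw [h0] at hle2
      exact hApos (le_antisymm hle2 zero_le)
    · intro hlt
      have h1 : (1 : ℝ) < α * δ := by
        calc (1 : ℝ) = α * (1 / α) := hone.symm
          _ < α * δ := by exact mul_lt_mul_of_pos_left hlt hα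
      refine le_antisymm (le_trans (measure_mono (Set.subset_univ _)) ?_) zero_le
      rw [hausdorff_univ_zero p h1]
  refine ⟨?_, ?_, ?_, ?_, ?_, ?_⟩
  · intro c A
    rw [hMeasEq, hMeasEq]
    exact hausdorff_translate p 1 zero_le_one c A
  · intro A
    refine ⟨toMeasurable μH[(1 : ℝ)] A, measurableSet_toMeasurable _ _,
      subset_toMeasurable _ _, ?_⟩
    rw [hMeasEq, hMeasEq, measure_toMeasurable]
  · rw [hMeasEq, hν]
    exact hχ
  · intro B hB
    rw [hMeasEq, hν]
  · refine hDim_eq_of_iff _ _ _ hδ0 ?_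
    refine hiff Set.univ MeasurableSet.univ ?_
    intro h0
    have h1 : (1 : ℝ≥0∞) ≤ χ Set.univ := by
      rw [← hχ0]
      exact measure_mono (Set.subset_univ _)
    rw [h0] at h1
    simp at h1
  · intro x r hr
    have hs : (0 : ℝ) < r ^ (α⁻¹ : ℝ) := Real.rpow_pos_of_pos hr _
    have hball : {y : ℚ_[p] | rhoQ p α x y < r} = Metric.ball x (r ^ (α⁻¹ : ℝ)) := by
      ext y
      rw [Set.mem_setOf_eq, Metric.mem_ball, dist_comm, dist_eq_norm]
      show ‖x - y‖ ^ α < r ↔ ‖x - y‖ < r ^ (α⁻¹ : ℝ)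
      constructor
      · intro h
        by_contra hge
        push_neg at hge
        have h2 := Real.rpow_le_rpow (Real.rpow_nonneg hr.le _) hge hα.le
        rw [← Real.rpow_mul hr.le, inv_mul_cancel₀ hα.ne', Real.rpow_one] at h2
        exact absurd (lt_of_le_of_lt h2 h) (lt_irrefl _)
      · intro h
        have h2 := Real.rpow_lt_rpow (norm_nonneg _) h hα
        rwa [← Real.rpow_mul hr.le, inv_mul_cancel₀ hα.ne', Real.rpow_one] at h2
    rw [hball]
    refine hDim_eq_of_iff _ _ _ hδ0 ?_
    refine hiff _ Metric.isOpen_ball.measurableSet ?_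
    exact Metric.isOpen_ball.measure_ne_zero χ ⟨x, Metric.mem_ball_self hs⟩
end
end

section
/- Fix a prime p and α > 0, and let G_p = [0,1) × ℤ_p be the group with addition (ξ,x)+(η,y) = (ξ+η−⌊ξ+η⌋, x+y+⌊ξ+η⌋) and metric ρ_α(f,g) = min(ℓ_α(f−g), ℓ_α(g−f)) where ℓ_α(ξ,x) = max(ξ, |x|_p^α). Then the map j : ℚ_p → G_p defined by j(x) = ({x}_p, [x]_p) is an injective homomorphism of additive groups; j is a local isometry from (ℚ_p, |·|_p^α) into (G_p, ρ_α): in fact ρ_α(j(x), j(y)) = |x−y|_p^α whenever x−y ∈ ℤ_p; and the image j(ℚ) of the rationals is dense in (G_p, ρ_α). -/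
open scoped ENNReal

noncomputable section

/-- The digit expansion of `p`-adic numbers: `digit x n` is the coefficient of `pⁿ`
in the canonical expansion `x = Σ_{n ≥ v(x)} (digit x n)·pⁿ` with digits in `{0,…,p−1}`. -/
structure PadicDigits (p : ℕ) [Fact p.Prime] : Type where
  digit : ℚ_[p] → ℤ → ℕ
  digit_lt : ∀ x n, digit x n < p
  digit_zero : ∀ n, digit 0 n = 0
  digit_eq_zero_of_lt : ∀ x : ℚ_[p], x ≠ 0 → ∀ n : ℤ, n < x.valuation → digit x n = 0
  digit_valuation_ne_zero : ∀ x : ℚ_[p], x ≠ 0 → digit x x.valuation ≠ 0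
  expansion : ∀ x : ℚ_[p], x = ∑' n : ℤ, (digit x n : ℚ_[p]) * (p : ℚ_[p]) ^ n


/-- The concrete model `G_p = [0,1) × ℤ_p` of the `p`-adic solenoid. -/
def GP (p : ℕ) [Fact p.Prime] : Type := Set.Ico (0 : ℝ) 1 × ℤ_[p]

variable {p : ℕ} [Fact p.Prime]

/-- Addition on `G_p`: `(ξ,x) + (η,y) = (ξ+η−⌊ξ+η⌋, x+y+⌊ξ+η⌋)`. -/
def gAdd (f g : GP p) : GP p :=
  (⟨Int.fract ((f.1 : ℝ) + (g.1 : ℝ)), Int.fract_nonneg _, Int.fract_lt_one _⟩,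
    f.2 + g.2 + ((⌊(f.1 : ℝ) + (g.1 : ℝ)⌋ : ℤ) : ℤ_[p]))

/-- The zero element of `G_p`. -/
def gZero : GP p := (⟨0, le_rfl, one_pos⟩, 0)

/-- Negation on `G_p`: `−(ξ,x) = (0,−x)` if `ξ = 0` and `(1−ξ, −x−1)` otherwise. -/
def gNeg (f : GP p) : GP p :=
  if h : (f.1 : ℝ) = 0 then (⟨0, le_rfl, one_pos⟩, -f.2)
  else
    (⟨1 - (f.1 : ℝ), by
        have h0 : (0 : ℝ) ≤ (f.1 : ℝ) := f.1.2.1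
        have h1 : (f.1 : ℝ) < 1 := f.1.2.2
        have hpos : (0 : ℝ) < (f.1 : ℝ) := lt_of_le_of_ne h0 (Ne.symm h)
        exact ⟨by linarith, by linarith⟩⟩,
      -f.2 - 1)

/-- `ℓ_α(ξ,x) = max(ξ, |x|_p^α)`. -/
def ell (α : ℝ) (f : GP p) : ℝ := max (f.1 : ℝ) (‖f.2‖ ^ α)

/-- The invariant metric `ρ_α(f,g) = min(ℓ_α(f−g), ℓ_α(g−f))` on `G_p`. -/
def rhoG (α : ℝ) (f g : GP p) : ℝ :=
  min (ell α (gAdd f (gNeg g))) (ell α (gAdd g (gNeg f)))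

/-- The fractional part `{x}_p = Σ_{n<0} x_n pⁿ ∈ ℚ ∩ [0,1)`, as a real number. -/
def fracPart (D : PadicDigits p) (x : ℚ_[p]) : ℝ :=
  ∑' n : ℕ, (D.digit x (-(n + 1) : ℤ) : ℝ) * (p : ℝ) ^ (-(n + 1) : ℤ)

/-- The integral part `[x]_p = Σ_{n≥0} x_n pⁿ ∈ ℤ_p`. -/
def intPart (D : PadicDigits p) (x : ℚ_[p]) : ℤ_[p] :=
  ∑' n : ℕ, (D.digit x n : ℤ_[p]) * (p : ℤ_[p]) ^ n


def GoodDec (p : ℕ) [Fact p.Prime] (x : ℚ_[p]) (ξ : ℝ) (z : ℤ_[p]) : Prop :=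
  ∃ r : ℚ, ξ = (r : ℝ) ∧ 0 ≤ r ∧ r < 1 ∧
    (∃ (k : ℕ) (m : ℤ), (p : ℚ) ^ k * r = (m : ℚ)) ∧ (r : ℚ_[p]) + (z : ℚ_[p]) = x

theorem goodDec_unique {x : ℚ_[p]} {ξ ξ' : ℝ} {z z' : ℤ_[p]}
    (h : GoodDec p x ξ z) (h' : GoodDec p x ξ' z') : ξ = ξ' ∧ z = z' := by
  obtain ⟨r, hξ, hr0, hr1, ⟨k, m, hkm⟩, hx⟩ := h
  obtain ⟨r', hξ', hr0', hr1', ⟨k', m', hkm'⟩, hx'⟩ := h'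
  have hp0 : (p : ℚ) ≠ 0 := Nat.cast_ne_zero.mpr (Fact.out (p := p.Prime)).ne_zero
  suffices hrr : r = r' by
    subst hrr
    have hz : (z : ℚ_[p]) = (z' : ℚ_[p]) := by
      have h1 := hx.trans hx'.symm
      exact add_left_cancel h1
    exact ⟨hξ.trans hξ'.symm, Subtype.ext hz⟩
  set s : ℚ := r - r' with hs
  set M : ℤ := m * p ^ k' - m' * p ^ k with hMdef
  have hM : (p : ℚ) ^ (k + k') * s = (M : ℚ) := by
    rw [hMdef, hs]
    push_cast
    linear_combination (p:ℚ)^k' * hkm - (p:ℚ)^k * hkm'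
  -- s is a p-adic integer
  have hnorm_s : ‖((s : ℚ) : ℚ_[p])‖ ≤ 1 := by
    have hcast : ((s : ℚ) : ℚ_[p]) = (z' : ℚ_[p]) - (z : ℚ_[p]) := by
      have h1 := hx.trans hx'.symm
      rw [hs]; push_cast
      linear_combination h1
    rw [hcast, ← PadicInt.coe_sub, ← PadicInt.norm_def]
    exact PadicInt.norm_le_one _
  have hMnorm : ‖((M : ℤ) : ℚ_[p])‖ ≤ (p : ℝ) ^ (-(k + k' : ℕ) : ℤ) := by
    have hMc : ((M : ℤ) : ℚ_[p]) = (p : ℚ_[p]) ^ (k + k') * ((s : ℚ) : ℚ_[p]) := by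
      have h2 : (((p : ℚ) ^ (k + k') * s : ℚ) : ℚ_[p]) = ((M : ℚ) : ℚ_[p]) := by
        exact_mod_cast congrArg (fun q : ℚ => (q : ℚ_[p])) hM
      push_cast at h2
      rw [← h2]
    rw [hMc, norm_mul, norm_pow, Padic.norm_p]
    calc ((p : ℝ)⁻¹) ^ (k + k') * ‖((s : ℚ) : ℚ_[p])‖
        ≤ ((p : ℝ)⁻¹) ^ (k + k') * 1 := by
          apply mul_le_mul_of_nonneg_left hnorm_s (by positivity)
      _ = (p : ℝ) ^ (-(k + k' : ℕ) : ℤ) := by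
          rw [mul_one, zpow_neg, zpow_natCast, ← inv_pow]
  obtain ⟨t, ht⟩ := (Padic.norm_int_le_pow_iff_dvd M (k + k')).mp hMnorm
  have hst : s = (t : ℚ) := by
    have : (p : ℚ) ^ (k + k') * s = (p : ℚ) ^ (k + k') * (t : ℚ) := by
      rw [hM, ht]; push_cast; ring
    exact mul_left_cancel₀ (pow_ne_zero _ hp0) this
  have ht0 : t = 0 := by
    have h1 : -1 < (t : ℚ) := by rw [← hst, hs]; linarith
    have h2 : (t : ℚ) < 1 := by rw [← hst, hs]; linarith
    exact_mod_cast by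
      have h1' : (-1 : ℤ) < t := by exact_mod_cast h1
      have h2' : t < 1 := by exact_mod_cast h2
      omega
  have : s = 0 := by rw [hst, ht0]; norm_num
  linarith [this, hs]

theorem goodDec_main (D : PadicDigits p) (x : ℚ_[p]) :
    GoodDec p x (fracPart D x) (intPart D x) := by
  have hp1 : 1 < p := (Fact.out (p := p.Prime)).one_lt
  have hp0 : (p : ℚ) ≠ 0 := by positivity
  have hp0R : (0 : ℝ) < p := by positivity
  by_cases hx : x = 0
  · subst hx
    refine ⟨0, ?_, le_rfl, one_pos, ⟨0, 0, by norm_num⟩, ?_⟩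
    · simp [fracPart, D.digit_zero]
    · simp [intPart, D.digit_zero]
  · set v := x.valuation with hv
    set N : ℕ := (-v).toNat with hN
    set f : ℤ → ℚ_[p] := fun n => (D.digit x n : ℚ_[p]) * (p : ℚ_[p]) ^ n with hf
    have hvanish : ∀ n : ℤ, n < v → f n = 0 := fun n hn => by
      simp [hf, D.digit_eq_zero_of_lt x hx n hn]
    -- summability of the integral part in ℤ_[p]
    set g : ℕ → ℤ_[p] := fun n => (D.digit x n : ℤ_[p]) * (p : ℤ_[p]) ^ n with hg
    have hgs : Summable g := by
      apply Summable.of_norm_bounded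
        (summable_geometric_of_lt_one (by positivity)
          (by rw [inv_lt_one_iff₀]; right; exact_mod_cast hp1) : Summable (fun n : ℕ => ((p : ℝ)⁻¹) ^ n))
      intro n
      rw [hg]
      calc ‖(D.digit x n : ℤ_[p]) * (p : ℤ_[p]) ^ n‖
          = ‖(D.digit x n : ℤ_[p])‖ * ‖(p : ℤ_[p])‖ ^ n := by
            rw [norm_mul, norm_pow]
        _ ≤ 1 * ((p : ℝ)⁻¹) ^ n := by
            apply mul_le_mul (PadicInt.norm_le_one _) (le_of_eq (by rw [PadicInt.norm_p]))
              (by positivity) zero_le_one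
        _ = ((p : ℝ)⁻¹) ^ n := one_mul _
    have hgsum : HasSum g (intPart D x) := hgs.hasSum
    -- map to ℚ_[p]
    have hcont : Continuous (PadicInt.Coe.ringHom (p := p)) := by
      have : Continuous (fun z : ℤ_[p] => (z : ℚ_[p])) := continuous_induced_dom
      exact this
    have hT : HasSum (fun n : ℕ => f (n : ℤ)) ((intPart D x : ℚ_[p])) := by
      have h1 := hgsum.map (PadicInt.Coe.ringHom (p := p)) hcont
      have h2 : ⇑(PadicInt.Coe.ringHom (p := p)) ∘ g = fun n : ℕ => f (n : ℤ) := by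
        funext n
        show ((g n : ℤ_[p]) : ℚ_[p]) = f (n : ℤ)
        rw [hg, hf]
        push_cast
        rw [zpow_natCast]
      have h3 : (PadicInt.Coe.ringHom (p := p)) (intPart D x) = ((intPart D x : ℤ_[p]) : ℚ_[p]) := rfl
      rw [h2, h3] at h1
      exact h1
    -- the negative part is a finite sum
    have hSvanish : ∀ n : ℕ, n ∉ Finset.range N → f (-(n + 1)) = 0 := by
      intro n hn
      apply hvanish
      simp only [Finset.mem_range, not_lt] at hn
      have h2 : -v ≤ ((-v).toNat : ℤ) := Int.self_le_toNat _
      omega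
    have hS : HasSum (fun n : ℕ => f (-(n + 1)))
        (∑ n ∈ Finset.range N, f (-(n + 1))) := hasSum_sum_of_ne_finset_zero hSvanish
    have hx_sum : HasSum f ((intPart D x : ℚ_[p]) + ∑ n ∈ Finset.range N, f (-(n + 1))) :=
      hT.of_nat_of_neg_add_one hS
    have hxeq : x = (intPart D x : ℚ_[p]) + ∑ n ∈ Finset.range N, f (-(n + 1)) := by
      calc x = ∑' n : ℤ, (D.digit x n : ℚ_[p]) * (p : ℚ_[p]) ^ n := D.expansion x
        _ = _ := hx_sum.tsum_eq
    -- the rational fractional part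
    set r : ℚ := ∑ n ∈ Finset.range N, (D.digit x (-(n + 1)) : ℚ) * (p : ℚ) ^ (-(n + 1) : ℤ)
      with hr
    have hrcast : ((r : ℚ) : ℚ_[p]) = ∑ n ∈ Finset.range N, f (-(n + 1)) := by
      rw [hr, hf]
      push_cast
      rfl
    have hfrac : fracPart D x = (r : ℝ) := by
      rw [fracPart, tsum_eq_sum (s := Finset.range N) ?_]
      · rw [hr]; push_cast; rfl
      · intro n hn
        have : D.digit x (-(n + 1)) = 0 := by
          apply D.digit_eq_zero_of_lt x hx
          simp only [Finset.mem_range, not_lt] at hn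
          have h2 : -v ≤ ((-v).toNat : ℤ) := Int.self_le_toNat _
          omega
        rw [this]
        norm_num
    have hr0 : 0 ≤ r := by
      apply Finset.sum_nonneg
      intro n _
      positivity
    have hr1 : r < 1 := by
      have hbound : ∀ M : ℕ, ∑ n ∈ Finset.range M, (D.digit x (-(n + 1)) : ℚ) *
          (p : ℚ) ^ (-(n + 1) : ℤ) ≤ 1 - (p : ℚ) ^ (-(M : ℤ)) := by
        intro M
        induction M with
        | zero => simp
        | succ M ih =>
          rw [Finset.sum_range_succ]
          have hq0 : (0 : ℚ) < (p : ℚ) ^ (-((M : ℤ) + 1)) := by positivity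
          have hd : (D.digit x (-((M : ℤ) + 1)) : ℚ) ≤ (p : ℚ) - 1 := by
            have h1 := D.digit_lt x (-((M : ℤ) + 1))
            have h2 : (D.digit x (-((M : ℤ) + 1)) : ℚ) + 1 ≤ (p : ℚ) := by exact_mod_cast h1
            linarith
          have hz : (p : ℚ) ^ (-((M : ℤ) + 1)) * (p : ℚ) = (p : ℚ) ^ (-(M : ℤ)) := by
            rw [← zpow_add_one₀ hp0]
            congr 1
            ring
          have hexp : (-((M : ℕ) + 1 : ℕ) : ℤ) = -((M : ℤ) + 1) := by push_cast; ring
          rw [hexp]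
          nlinarith [ih, hq0, hd, hz]
      have h2 := hbound N
      have h3 : (0 : ℚ) < (p : ℚ) ^ (-(N : ℤ)) := by positivity
      rw [hr]
      linarith
    -- denominator is a power of p
    have hden : ∃ (k : ℕ) (m : ℤ), (p : ℚ) ^ k * r = (m : ℚ) := by
      refine ⟨N, ∑ n ∈ Finset.range N, (D.digit x (-(n + 1)) : ℤ) * (p : ℤ) ^ (N - (n + 1)), ?_⟩
      rw [hr, Finset.mul_sum]
      push_cast
      apply Finset.sum_congr rfl
      intro n hn
      have hn' : n < N := Finset.mem_range.mp hn
      have hpow : (p : ℚ) ^ (N : ℕ) * (p : ℚ) ^ (-(n + 1) : ℤ) = (p : ℚ) ^ ((N - (n + 1) : ℕ) : ℤ) := by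
        rw [← zpow_natCast (p : ℚ) N, ← zpow_add₀ hp0]
        congr 1
        omega
      rw [zpow_natCast] at hpow
      rw [← mul_assoc, mul_comm ((p:ℚ) ^ (N : ℕ)) _, mul_assoc, hpow]
  -- assemble
    refine ⟨r, hfrac, hr0, hr1, hden, ?_⟩
    rw [hrcast]
    conv_rhs => rw [hxeq]
    exact add_comm _ _

theorem GP.ext' {p : ℕ} [Fact p.Prime] {f g : GP p}
    (h1 : (f.1 : ℝ) = (g.1 : ℝ)) (h2 : f.2 = g.2) : f = g :=
  Prod.ext (Subtype.ext h1) h2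

theorem jdet {p : ℕ} [Fact p.Prime] {D : PadicDigits p} {j : ℚ_[p] → GP p}
    (hj : ∀ x : ℚ_[p], ((j x).1 : ℝ) = fracPart D x ∧ (j x).2 = intPart D x)
    {x : ℚ_[p]} {ξ : ℝ} {z : ℤ_[p]} (h : GoodDec p x ξ z) :
    ((j x).1 : ℝ) = ξ ∧ (j x).2 = z := by
  obtain ⟨h1, h2⟩ := goodDec_unique (goodDec_main D x) h
  exact ⟨(hj x).1.trans h1, (hj x).2.trans h2⟩

theorem jspec {p : ℕ} [Fact p.Prime] {D : PadicDigits p} {j : ℚ_[p] → GP p}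
    (hj : ∀ x : ℚ_[p], ((j x).1 : ℝ) = fracPart D x ∧ (j x).2 = intPart D x)
    (x : ℚ_[p]) :
    ∃ r : ℚ, ((j x).1 : ℝ) = (r : ℝ) ∧ 0 ≤ r ∧ r < 1 ∧
      (∃ (k : ℕ) (m : ℤ), (p : ℚ) ^ k * r = (m : ℚ)) ∧
      (r : ℚ_[p]) + ((j x).2 : ℚ_[p]) = x := by
  obtain ⟨r, h1, h2, h3, h4, h5⟩ := goodDec_main D x
  exact ⟨r, (hj x).1.trans h1, h2, h3, h4, by rw [(hj x).2]; exact h5⟩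

theorem jhom {p : ℕ} [Fact p.Prime] {D : PadicDigits p} {j : ℚ_[p] → GP p}
    (hj : ∀ x : ℚ_[p], ((j x).1 : ℝ) = fracPart D x ∧ (j x).2 = intPart D x)
    (x y : ℚ_[p]) : j (x + y) = gAdd (j x) (j y) := by
  obtain ⟨rx, hx1, hx2, hx3, ⟨kx, mx, hx4⟩, hx5⟩ := jspec hj x
  obtain ⟨ry, hy1, hy2, hy3, ⟨ky, my, hy4⟩, hy5⟩ := jspec hj y
  set n : ℤ := ⌊(rx : ℝ) + (ry : ℝ)⌋ with hn
  set r : ℚ := rx + ry - n with hrdef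
  have hξ : Int.fract ((rx : ℝ) + (ry : ℝ)) = (r : ℝ) := by
    rw [Int.fract, hrdef]
    push_cast
    rw [← Rat.cast_add, Rat.floor_cast]
    rw [show n = ⌊rx + ry⌋ by rw [hn, ← Rat.cast_add, Rat.floor_cast]]
  have hgood : GoodDec p (x + y) (Int.fract ((rx : ℝ) + (ry : ℝ)))
      ((j x).2 + (j y).2 + (n : ℤ_[p])) := by
    refine ⟨r, hξ, ?_, ?_,
      ⟨kx + ky, p ^ ky * mx + p ^ kx * my - p ^ (kx + ky) * n, ?_⟩, ?_⟩
    · have h := Int.fract_nonneg ((rx : ℝ) + (ry : ℝ))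
      rw [hξ] at h
      exact_mod_cast h
    · have h := Int.fract_lt_one ((rx : ℝ) + (ry : ℝ))
      rw [hξ] at h
      exact_mod_cast h
    · rw [hrdef]
      push_cast
      linear_combination (p : ℚ) ^ ky * hx4 + (p : ℚ) ^ kx * hy4
    · rw [hrdef]
      push_cast
      linear_combination hx5 + hy5
  obtain ⟨hd1, hd2⟩ := jdet hj hgood
  have hfloor : ⌊((j x).1 : ℝ) + ((j y).1 : ℝ)⌋ = n := by rw [hx1, hy1, hn]
  apply GP.ext'
  · show ((j (x + y)).1 : ℝ) = Int.fract (((j x).1 : ℝ) + ((j y).1 : ℝ))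
    rw [hd1, hx1, hy1]
  · show (j (x + y)).2 = (j x).2 + (j y).2 + ((⌊((j x).1 : ℝ) + ((j y).1 : ℝ)⌋ : ℤ) : ℤ_[p])
    rw [hd2, hfloor]

theorem jneg {p : ℕ} [Fact p.Prime] {D : PadicDigits p} {j : ℚ_[p] → GP p}
    (hj : ∀ x : ℚ_[p], ((j x).1 : ℝ) = fracPart D x ∧ (j x).2 = intPart D x)
    (x : ℚ_[p]) : j (-x) = gNeg (j x) := by
  obtain ⟨r, h1, h2, h3, ⟨k, m, h4⟩, h5⟩ := jspec hj x
  by_cases h0 : ((j x).1 : ℝ) = 0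
  · have hr0 : r = 0 := by exact_mod_cast (h0.symm.trans h1).symm
    have hgood : GoodDec p (-x) 0 (-(j x).2) := by
      refine ⟨0, by norm_num, le_rfl, one_pos, ⟨0, 0, by norm_num⟩, ?_⟩
      rw [hr0] at h5
      push_cast at h5 ⊢
      linear_combination -h5
    obtain ⟨hd1, hd2⟩ := jdet hj hgood
    rw [show gNeg (j x) = _ from dif_pos h0]
    exact GP.ext' hd1 hd2
  · have hrpos : 0 < r := by
      rcases lt_or_eq_of_le h2 with h | h
      · exact h
      · exact absurd (h1.trans (by rw [← h]; norm_num)) h0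
    have hgood : GoodDec p (-x) (1 - ((j x).1 : ℝ)) (-(j x).2 - 1) := by
      refine ⟨1 - r, ?_, by linarith, by linarith, ⟨k, p ^ k - m, ?_⟩, ?_⟩
      · rw [h1]; push_cast; ring
      · push_cast; linear_combination -h4
      · push_cast; linear_combination -h5
    obtain ⟨hd1, hd2⟩ := jdet hj hgood
    rw [show gNeg (j x) = _ from dif_neg h0]
    exact GP.ext' hd1 hd2

theorem jint {p : ℕ} [Fact p.Prime] {D : PadicDigits p} {j : ℚ_[p] → GP p}
    (hj : ∀ x : ℚ_[p], ((j x).1 : ℝ) = fracPart D x ∧ (j x).2 = intPart D x)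
    (w : ℚ_[p]) (hw : ‖w‖ ≤ 1) : ((j w).1 : ℝ) = 0 ∧ ((j w).2 : ℚ_[p]) = w := by
  have hgood : GoodDec p w 0 ⟨w, hw⟩ := by
    refine ⟨0, by norm_num, le_rfl, one_pos, ⟨0, 0, by norm_num⟩, ?_⟩
    push_cast
    show (0 : ℚ_[p]) + w = w
    rw [zero_add]
  obtain ⟨hd1, hd2⟩ := jdet hj hgood
  exact ⟨hd1, by rw [hd2]⟩

theorem jell {p : ℕ} [Fact p.Prime] {D : PadicDigits p} {j : ℚ_[p] → GP p}
    (hj : ∀ x : ℚ_[p], ((j x).1 : ℝ) = fracPart D x ∧ (j x).2 = intPart D x)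
    (α : ℝ) (w : ℚ_[p]) (hw : ‖w‖ ≤ 1) : ell α (j w) = ‖w‖ ^ α := by
  obtain ⟨e1, e2⟩ := jint hj w hw
  rw [ell, e1, show ‖(j w).2‖ = ‖w‖ by rw [PadicInt.norm_def, e2]]
  exact max_eq_right (Real.rpow_nonneg (norm_nonneg w) α)

/-- The map `j : ℚ_p → G_p`, `j(x) = ({x}_p, [x]_p)`, is an injective homomorphism of
additive groups, a local isometry from `(ℚ_p, |·|_p^α)` into `(G_p, ρ_α)` — in fact
`ρ_α(j(x),j(y)) = |x−y|_p^α` whenever `x−y ∈ ℤ_p` — and `j(ℚ)` is dense in `(G_p, ρ_α)`. -/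
theorem j_injective_hom_local_isometry_dense {p : ℕ} [Fact p.Prime] (D : PadicDigits p)
    (α : ℝ) (hα : 0 < α) (j : ℚ_[p] → GP p)
    (hj : ∀ x : ℚ_[p], ((j x).1 : ℝ) = fracPart D x ∧ (j x).2 = intPart D x) :
    Function.Injective j ∧
      (∀ x y : ℚ_[p], j (x + y) = gAdd (j x) (j y)) ∧
      (∀ x y : ℚ_[p], ‖x - y‖ ≤ 1 → rhoG α (j x) (j y) = ‖x - y‖ ^ α) ∧
      (∀ (f : GP p) (ε : ℝ), 0 < ε → ∃ q : ℚ, rhoG α (j (q : ℚ_[p])) f < ε) := by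
  have hp1 : 1 < p := (Fact.out (p := p.Prime)).one_lt
  have hp1R : (1 : ℝ) < p := by exact_mod_cast hp1
  have hsub : ∀ x y : ℚ_[p], gAdd (j x) (gNeg (j y)) = j (x - y) := by
    intro x y
    rw [← jneg hj, ← jhom hj, ← sub_eq_add_neg]
  refine ⟨?_, fun x y => jhom hj x y, ?_, ?_⟩
  · -- injectivity
    intro x y hxy
    obtain ⟨rx, hx1, _, _, _, hx5⟩ := jspec hj x
    obtain ⟨ry, hy1, _, _, _, hy5⟩ := jspec hj y
    have h1 : (rx : ℝ) = (ry : ℝ) := by rw [← hx1, ← hy1, hxy]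
    have h2 : rx = ry := by exact_mod_cast h1
    rw [← hx5, ← hy5, hxy, h2]
  · -- local isometry
    intro x y h
    have h' : ‖y - x‖ ≤ 1 := by rwa [norm_sub_rev]
    rw [rhoG, hsub, hsub, jell hj α _ h, jell hj α _ h', norm_sub_rev y x, min_self]
  · -- density
    rintro ⟨⟨ξ, hξ0, hξ1⟩, z⟩ ε hε
    obtain ⟨k, hk⟩ := exists_pow_lt_of_lt_one hε
      (by rw [inv_lt_one_iff₀]; right; exact hp1R : (p : ℝ)⁻¹ < 1)
    have hpkR : (0 : ℝ) < (p : ℝ) ^ k := by positivity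
    set A : ℤ := ⌊ξ * (p : ℝ) ^ k⌋ with hA
    set a : ℚ := (A : ℚ) / (p : ℚ) ^ k with ha
    have haR : (a : ℝ) = (A : ℝ) / (p : ℝ) ^ k := by rw [ha]; push_cast; ring
    have hA0 : 0 ≤ A := Int.floor_nonneg.mpr (by positivity)
    have ha0 : 0 ≤ (a : ℝ) := by rw [haR]; positivity
    have haξ : (a : ℝ) ≤ ξ := by
      rw [haR, div_le_iff₀ hpkR]
      exact Int.floor_le _
    have hξa : ξ - (a : ℝ) < ((p : ℝ)⁻¹) ^ k := by
      have h1 : ξ * (p : ℝ) ^ k < A + 1 := Int.lt_floor_add_one _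
      rw [haR]
      rw [sub_lt_iff_lt_add, inv_pow]
      rw [show (((p : ℝ) ^ k)⁻¹ + (A : ℝ) / (p : ℝ) ^ k) = ((A : ℝ) + 1) / (p : ℝ) ^ k by ring]
      rw [lt_div_iff₀ hpkR]
      linarith
    have hεα : 0 < ε ^ α⁻¹ := Real.rpow_pos_of_pos hε _
    obtain ⟨m', hm'⟩ := (PadicInt.denseRange_intCast (p := p)).exists_dist_lt z hεα
    have hznorm : ‖z - ((m' : ℤ) : ℤ_[p])‖ ^ α < ε := by
      rw [← dist_eq_norm]
      calc dist z ((m' : ℤ) : ℤ_[p]) ^ α < (ε ^ α⁻¹) ^ α :=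
            Real.rpow_lt_rpow dist_nonneg hm' hα
        _ = ε := Real.rpow_inv_rpow hε.le hα.ne'
    refine ⟨a + m', ?_⟩
    -- identify j (a + m')
    have hgood : GoodDec p (((a + m' : ℚ)) : ℚ_[p]) (a : ℝ) ((m' : ℤ) : ℤ_[p]) := by
      refine ⟨a, rfl, ?_, ?_, ⟨k, A, ?_⟩, ?_⟩
      · exact_mod_cast ha0
      · have : (a : ℝ) < 1 := lt_of_le_of_lt haξ hξ1
        exact_mod_cast this
      · rw [ha]
        field_simp
      · push_cast
        ring
    obtain ⟨hd1, hd2⟩ := jdet hj hgood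
    set q : ℚ_[p] := ((a + m' : ℚ) : ℚ_[p]) with hq
    set F : GP p := (⟨ξ, hξ0, hξ1⟩, z) with hF
    have hFv : (F.1 : ℝ) = ξ := rfl
    -- compute the second branch of the metric
    have hB : ell α (gAdd F (gNeg (j q))) = max (ξ - (a : ℝ)) (‖z - ((m' : ℤ) : ℤ_[p])‖ ^ α) := by
      by_cases hc : ((j q).1 : ℝ) = 0
      · have hac : (a : ℝ) = 0 := by rw [← hd1, hc]
        have hG1 : (((gNeg (j q)).1 : ℝ)) = 0 := by
          rw [show gNeg (j q) = _ from dif_pos hc]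
        have hG2 : (gNeg (j q)).2 = -(j q).2 := by
          rw [show gNeg (j q) = _ from dif_pos hc]
        have e1 : ((gAdd F (gNeg (j q))).1 : ℝ) = ξ - (a : ℝ) := by
          show Int.fract ((F.1 : ℝ) + ((gNeg (j q)).1 : ℝ)) = ξ - (a : ℝ)
          rw [hG1, add_zero, hFv, Int.fract_eq_self.mpr ⟨hξ0, hξ1⟩, hac, sub_zero]
        have e2 : (gAdd F (gNeg (j q))).2 = z - ((m' : ℤ) : ℤ_[p]) := by
          show F.2 + (gNeg (j q)).2 + ((⌊(F.1 : ℝ) + ((gNeg (j q)).1 : ℝ)⌋ : ℤ) : ℤ_[p]) = _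
          rw [hG1, hG2, add_zero, hFv,
            show ⌊ξ⌋ = 0 from Int.floor_eq_zero_iff.mpr ⟨hξ0, hξ1⟩, hd2]
          show z + _ + ((0 : ℤ) : ℤ_[p]) = _
          push_cast
          ring
        rw [ell, e1, e2]
      · have hsub1 : 0 ≤ ξ - (a : ℝ) := by linarith
        have hsub2 : ξ - (a : ℝ) < 1 := by linarith
        have hG1 : (((gNeg (j q)).1 : ℝ)) = 1 - (a : ℝ) := by
          rw [show gNeg (j q) = _ from dif_neg hc]
          show 1 - ((j q).1 : ℝ) = 1 - (a : ℝ)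
          rw [hd1]
        have hG2 : (gNeg (j q)).2 = -(j q).2 - 1 := by
          rw [show gNeg (j q) = _ from dif_neg hc]
        have e1 : ((gAdd F (gNeg (j q))).1 : ℝ) = ξ - (a : ℝ) := by
          show Int.fract ((F.1 : ℝ) + ((gNeg (j q)).1 : ℝ)) = ξ - (a : ℝ)
          rw [hG1, hFv, show ξ + (1 - (a : ℝ)) = (ξ - (a : ℝ)) + 1 by ring,
            Int.fract_add_one, Int.fract_eq_self.mpr ⟨hsub1, hsub2⟩]
        have e2 : (gAdd F (gNeg (j q))).2 = z - ((m' : ℤ) : ℤ_[p]) := by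
          show F.2 + (gNeg (j q)).2 + ((⌊(F.1 : ℝ) + ((gNeg (j q)).1 : ℝ)⌋ : ℤ) : ℤ_[p]) = _
          rw [hG1, hG2, hFv, hd2, show ξ + (1 - (a : ℝ)) = (ξ - (a : ℝ)) + 1 by ring,
            show ⌊(ξ - (a : ℝ)) + 1⌋ = ⌊ξ - (a : ℝ)⌋ + 1 from Int.floor_add_one _,
            show ⌊ξ - (a : ℝ)⌋ = 0 from Int.floor_eq_zero_iff.mpr ⟨hsub1, hsub2⟩]
          show F.2 + _ + (((0 : ℤ) + 1 : ℤ) : ℤ_[p]) = _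
          push_cast
          ring
        rw [ell, e1, e2]
    have hlt : ell α (gAdd F (gNeg (j q))) < ε := by
      rw [hB]
      apply max_lt
      · exact lt_trans hξa hk
      · exact hznorm
    calc rhoG α (j q) F ≤ ell α (gAdd F (gNeg (j q))) := min_le_right _ _
      _ < ε := hlt
end
end

section
/- For every prime p, every finite m ∈ ℕ, and every positive integer q, there exists a polynomial P with complex coefficients such that Υ_s^{(m)}(q) − Υ_s^{(m)}(0) = P(s) for all s ∈ ℂ with |s| < 1 (here q is regarded as an element of ℚ_p). -/
open scoped ENNReal MeasureTheory

noncomputable section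

variable {p : ℕ} [Fact p.Prime]

/-- `χ_n^{(m)}(x) = exp((2πi/p) Σ_{k=0}^{m} x_{n−k} p^{−k})`, where `m ∈ ℕ ∪ {∞}`. -/
def chiFn (D : PadicDigits p) (m : ℕ∞) (x : ℚ_[p]) (n : ℤ) : ℂ :=
  Complex.exp (((2 * Real.pi / p *
      ∑' k : ℕ, if (k : ℕ∞) ≤ m then (D.digit x (n - k) : ℝ) / (p : ℝ) ^ k else 0 : ℝ) : ℂ)
    * Complex.I)

/-- `Υ_s^{(m)}(x) = Σ_{n<0} sⁿ(χ_n^{(m)}(x) − 1) + Σ_{n≥0} sⁿ χ_n^{(m)}(x)`. -/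
def Upsilon (D : PadicDigits p) (m : ℕ∞) (s : ℂ) (x : ℚ_[p]) : ℂ :=
  ∑' n : ℤ, s ^ n * (chiFn D m x n - if n < 0 then 1 else 0)

/-- `Δ_s^{(m)} = inf{ |Υ_s^{(m)}(x) − Υ_s^{(m)}(y)| : x, y ∈ ℚ_p, |x−y|_p = 1 }`. -/
def Delta (D : PadicDigits p) (m : ℕ∞) (s : ℂ) : ℝ :=
  sInf {r : ℝ | ∃ x y : ℚ_[p], ‖x - y‖ = 1 ∧
    r = ‖Upsilon D m s x - Upsilon D m s y‖}

/-- The scaling dimension `D_s = −1/log_p |s|`. -/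
def scalingDim (p : ℕ) (s : ℂ) : ℝ := -1 / Real.logb p ‖s‖


lemma my_sum_Ico_int {M : Type*} [AddCommMonoid M] (g : ℤ → M) (N : ℕ) :
    ∑ n ∈ Finset.Ico (0:ℤ) (N:ℤ), g n = ∑ k ∈ Finset.range N, g (k:ℤ) := by
  induction N with
  | zero => simp
  | succ n ih =>
      have hins : Finset.Ico (0:ℤ) ((n+1:ℕ):ℤ) = insert (n:ℤ) (Finset.Ico (0:ℤ) (n:ℤ)) := by
        ext j
        simp only [Finset.mem_Ico, Finset.mem_insert]
        omega
      rw [hins, Finset.sum_insert (by simp), ih, Finset.sum_range_succ, add_comm]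

lemma my_chiFn_eq_one (D : PadicDigits p) (m : ℕ∞) (x : ℚ_[p]) (n : ℤ)
    (h : ∀ k : ℕ, (k:ℕ∞) ≤ m → D.digit x (n - k) = 0) : chiFn D m x n = 1 := by
  have hz : ∀ k : ℕ, (if (k : ℕ∞) ≤ m then (D.digit x (n - k) : ℝ) / (p : ℝ) ^ k else 0) = 0 := by
    intro k
    split
    · rw [h k ‹_›]; simp
    · rfl
  simp only [chiFn, hz, tsum_zero, mul_zero, Complex.ofReal_zero, zero_mul, Complex.exp_zero]

lemma my_abs_chiFn (D : PadicDigits p) (m : ℕ∞) (x : ℚ_[p]) (n : ℤ) :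
    ‖chiFn D m x n‖ = 1 := by
  rw [chiFn, Complex.norm_exp]
  simp

lemma my_val_nonneg (q : ℕ) (hq : 0 < q) : 0 ≤ ((q : ℚ_[p])).valuation := by
  have hx : (q:ℚ_[p]) ≠ 0 := Nat.cast_ne_zero.mpr hq.ne'
  by_contra h
  push_neg at h
  have h1 : ‖(q:ℚ_[p])‖ ≤ 1 := by
    have := Padic.norm_int_le_one (p := p) (q : ℤ)
    simpa using this
  rw [Padic.norm_eq_zpow_neg_valuation hx] at h1
  have hp1 : (1:ℝ) < (p:ℝ) := by exact_mod_cast (Fact.out : p.Prime).one_lt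
  have : (1:ℝ) < (p:ℝ) ^ (-((q:ℚ_[p])).valuation) := one_lt_zpow₀ hp1 (by omega)
  linarith

lemma my_digit_eventually_zero (D : PadicDigits p) (q : ℕ) (hq : 0 < q) :
    ∃ N : ℕ, ∀ n : ℤ, (N:ℤ) ≤ n → D.digit (q:ℚ_[p]) n = 0 := by
  have hp1 : 1 < p := (Fact.out : p.Prime).one_lt
  have hp1R : (1:ℝ) < (p:ℝ) := by exact_mod_cast hp1
  set x : ℚ_[p] := (q:ℚ_[p]) with hxdef
  have hx : x ≠ 0 := Nat.cast_ne_zero.mpr hq.ne'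
  have hval : 0 ≤ x.valuation := my_val_nonneg q hq
  have hneg : ∀ n : ℤ, n < 0 → D.digit x n = 0 := fun n hn =>
    D.digit_eq_zero_of_lt x hx n (lt_of_lt_of_le hn hval)
  set f : ℤ → ℚ_[p] := fun n => (D.digit x n : ℚ_[p]) * (p : ℚ_[p]) ^ n with hfdef
  have hnorm : ∀ n : ℤ, ‖f n‖ ≤ (p:ℝ) ^ (-n) := by
    intro n
    rw [hfdef]
    simp only
    rw [norm_mul, Padic.norm_p_zpow]
    have h1 : ‖((D.digit x n : ℚ_[p]))‖ ≤ 1 := by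
      have := Padic.norm_int_le_one (p := p) (D.digit x n : ℤ)
      simpa using this
    have h2 : (0:ℝ) < (p:ℝ) ^ (-n) := by positivity
    nlinarith [norm_nonneg ((D.digit x n : ℚ_[p]))]
  have hsum : Summable f := by
    apply Summable.of_nat_of_neg
    · apply Summable.of_norm_bounded (g := fun n : ℕ => ((p:ℝ)⁻¹) ^ n)
      · exact summable_geometric_of_lt_one (by positivity) (by
          rw [inv_lt_one_iff₀]; right; exact hp1R)
      · intro n
        refine (hnorm (n:ℤ)).trans_eq ?_
        rw [zpow_neg, zpow_natCast, ← inv_pow]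
    · apply summable_of_ne_finset_zero (s := ({0} : Finset ℕ))
      intro n hn
      have hn0 : 0 < n := Nat.pos_of_ne_zero (by simpa using hn)
      have : D.digit x (-(n:ℤ)) = 0 := hneg _ (by omega)
      simp [hfdef, this]
  set S : ℕ → ℕ := fun N => ∑ k ∈ Finset.range N, D.digit x k * p ^ k with hSdef
  have hSlt : ∀ N, S N + 1 ≤ p ^ N := by
    intro N
    induction N with
    | zero => simp [hSdef]
    | succ n ih =>
        have hd : D.digit x n + 1 ≤ p := D.digit_lt x n
        have : S (n+1) = S n + D.digit x n * p ^ n := by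
          rw [hSdef]
          exact Finset.sum_range_succ _ _
        calc S (n+1) + 1 = (S n + 1) + D.digit x n * p ^ n := by omega
          _ ≤ p ^ n + D.digit x n * p ^ n := by omega
          _ = (D.digit x n + 1) * p ^ n := by ring
          _ ≤ p * p ^ n := Nat.mul_le_mul_right _ hd
          _ = p ^ (n+1) := by ring
  have hScast : ∀ N : ℕ, ((S N : ℕ) : ℚ_[p]) = ∑ n ∈ Finset.Ico (0:ℤ) (N:ℤ), f n := by
    intro N
    rw [my_sum_Ico_int, hSdef]
    push_cast
    refine Finset.sum_congr rfl fun k _ => ?_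
    rw [hfdef]
    simp only
    rw [zpow_natCast]
  have key : ∀ N : ℕ, ‖x - (S N : ℚ_[p])‖ ≤ (p:ℝ) ^ (-(N:ℤ)) := by
    intro N
    have hexp : x = ∑' n, f n := D.expansion x
    have hsplit : ∑' n, f n = ∑ n ∈ Finset.Ico (0:ℤ) (N:ℤ), f n
        + ∑' n : (((Finset.Ico (0:ℤ) (N:ℤ) : Set ℤ))ᶜ : Set ℤ), f n := by
      rw [← Finset.tsum_subtype]
      exact (Summable.tsum_add_tsum_compl (hsum.subtype _) (hsum.subtype _)).symm
    have : x - (S N : ℚ_[p]) = ∑' n : (((Finset.Ico (0:ℤ) (N:ℤ) : Set ℤ))ᶜ : Set ℤ), f n := by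
      rw [hScast N, hexp, hsplit]; ring
    rw [this]
    apply IsUltrametricDist.norm_tsum_le_of_forall_le_of_nonneg (by positivity)
    rintro ⟨i, hi⟩
    simp only [Set.mem_compl_iff, Finset.coe_Ico, Set.mem_Ico, not_and, not_lt] at hi
    by_cases h0 : 0 ≤ i
    · have hiN : (N:ℤ) ≤ i := hi h0
      exact (hnorm i).trans (by
        apply zpow_le_zpow_right₀ hp1R.le
        omega)
    · have : D.digit x i = 0 := hneg i (by omega)
      simp only [hfdef, this, Nat.cast_zero, zero_mul, norm_zero]
      positivity
  have heq : ∀ N : ℕ, q < p ^ N → S N = q := by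
    intro N hN
    have hdvd : ((p:ℤ) ^ N) ∣ ((q:ℤ) - (S N : ℤ)) := by
      rw [← Padic.norm_int_le_pow_iff_dvd]
      have : (((q:ℤ) - (S N : ℤ) : ℤ) : ℚ_[p]) = x - (S N : ℚ_[p]) := by push_cast; ring
      rw [this]
      exact key N
    have h1 : (S N : ℤ) < (p:ℤ) ^ N := by exact_mod_cast hSlt N
    have h2 : (q:ℤ) < (p:ℤ) ^ N := by exact_mod_cast hN
    have := Int.eq_zero_of_abs_lt_dvd hdvd (by
      rw [abs_sub_lt_iff]
      constructor <;> omega)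
    omega
  refine ⟨q, fun n hn => ?_⟩
  have hnn : 0 ≤ n := le_trans (by positivity) hn
  obtain ⟨k, rfl⟩ : ∃ k : ℕ, n = (k:ℤ) := ⟨n.toNat, (Int.toNat_of_nonneg hnn).symm⟩
  have hk : q ≤ k := by exact_mod_cast hn
  have hqk : q < p ^ k := lt_of_lt_of_le (Nat.lt_pow_self (n := q) hp1) (Nat.pow_le_pow_right (by omega) hk)
  have hqk1 : q < p ^ (k+1) := lt_of_lt_of_le hqk (Nat.pow_le_pow_right (by omega) (by omega))
  have e1 : S k = q := heq k hqk
  have e2 : S (k+1) = q := heq (k+1) hqk1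
  have : S (k+1) = S k + D.digit x k * p ^ k := Finset.sum_range_succ _ _
  have hp0 : 0 < p ^ k := Nat.pow_pos (by omega)
  have : D.digit x k * p ^ k = 0 := by omega
  rcases Nat.mul_eq_zero.mp this with h | h
  · exact h
  · omega

/-- For every prime `p`, every finite `m ∈ ℕ`, and every positive integer `q`, there is a
polynomial `P` with complex coefficients such that `Υ_s^{(m)}(q) − Υ_s^{(m)}(0) = P(s)`
for all `s ∈ ℂ` with `|s| < 1` (`q` regarded as an element of `ℚ_p`). -/
theorem upsilon_sub_upsilon_zero_eq_polynomial {p : ℕ} [Fact p.Prime] (D : PadicDigits p)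
    (m : ℕ) (q : ℕ) (hq : 0 < q) :
    ∃ P : Polynomial ℂ, ∀ s : ℂ, ‖s‖ < 1 →
      Upsilon D (m : ℕ∞) s (q : ℚ_[p]) - Upsilon D (m : ℕ∞) s 0 = P.eval s := by
  obtain ⟨N, hN⟩ := my_digit_eventually_zero D q hq
  set M : ℕ := N + m with hMdef
  have hx : (q:ℚ_[p]) ≠ 0 := Nat.cast_ne_zero.mpr hq.ne'
  have hval : 0 ≤ ((q:ℚ_[p])).valuation := my_val_nonneg q hq
  have hχ0 : ∀ n : ℤ, chiFn D (m:ℕ∞) (0:ℚ_[p]) n = 1 := fun n =>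
    my_chiFn_eq_one D _ _ _ (fun k _ => D.digit_zero _)
  have hχqneg : ∀ n : ℤ, n < 0 → chiFn D (m:ℕ∞) (q:ℚ_[p]) n = 1 := by
    intro n hn
    refine my_chiFn_eq_one D _ _ _ (fun k _ => ?_)
    exact D.digit_eq_zero_of_lt _ hx _ (lt_of_lt_of_le (by omega) hval)
  have hχqbig : ∀ n : ℤ, (M:ℤ) ≤ n → chiFn D (m:ℕ∞) (q:ℚ_[p]) n = 1 := by
    intro n hn
    refine my_chiFn_eq_one D _ _ _ (fun k hk => ?_)
    have hkm : k ≤ m := by exact_mod_cast hk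
    refine hN _ ?_
    have : (M:ℤ) = (N:ℤ) + (m:ℤ) := by push_cast [hMdef]; ring
    omega
  refine ⟨∑ k ∈ Finset.range M, Polynomial.C (chiFn D (m:ℕ∞) (q:ℚ_[p]) (k:ℤ) - 1)
    * Polynomial.X ^ k, fun s hs => ?_⟩
  have hsble : ∀ x : ℚ_[p], (∀ n : ℤ, n < 0 → chiFn D (m:ℕ∞) x n = 1) →
      Summable (fun n : ℤ => s ^ n * (chiFn D (m:ℕ∞) x n - if n < 0 then 1 else 0)) := by
    intro x hx1
    apply Summable.of_nat_of_neg
    · apply Summable.of_norm_bounded (g := fun n : ℕ => ‖s‖ ^ n)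
      · exact summable_geometric_of_lt_one (norm_nonneg s) hs
      · intro n
        have hn : ¬ ((n:ℤ) < 0) := by omega
        rw [if_neg hn, sub_zero, norm_mul]
        have h1 : ‖s ^ ((n:ℕ):ℤ)‖ = ‖s‖ ^ n := by
          rw [zpow_natCast, norm_pow]
        have h2 : ‖chiFn D (m:ℕ∞) x (n:ℤ)‖ = 1 := by
          rw [my_abs_chiFn]
        rw [h1, h2, mul_one]
    · apply summable_of_ne_finset_zero (s := ({0} : Finset ℕ))
      intro n hn
      have hn0 : (-(n:ℤ)) < 0 := by
        have : n ≠ 0 := by simpa using hn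
        omega
      simp only [if_pos hn0, hx1 _ hn0, sub_self, mul_zero]
  have hsq := hsble _ hχqneg
  have hs0 := hsble 0 (fun n _ => hχ0 n)
  rw [Upsilon, Upsilon, ← Summable.tsum_sub hsq hs0]
  have hvanish : ∀ n : ℤ, n ∉ Finset.Ico (0:ℤ) (M:ℤ) →
      (s ^ n * (chiFn D (m:ℕ∞) (q:ℚ_[p]) n - if n < 0 then 1 else 0)
        - s ^ n * (chiFn D (m:ℕ∞) (0:ℚ_[p]) n - if n < 0 then 1 else 0)) = 0 := by
    intro n hn
    simp only [Finset.mem_Ico, not_and, not_lt] at hn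
    by_cases h0 : 0 ≤ n
    · have hMn : (M:ℤ) ≤ n := hn h0
      rw [hχqbig n hMn, hχ0 n]
      ring
    · push_neg at h0
      rw [hχqneg n h0, hχ0 n, if_pos h0]
      ring
  rw [tsum_eq_sum hvanish, my_sum_Ico_int]
  rw [Polynomial.eval_finset_sum]
  refine Finset.sum_congr rfl fun k _ => ?_
  have hk : ¬ ((k:ℤ) < 0) := by omega
  rw [if_neg hk, hχ0, zpow_natCast]
  simp only [Polynomial.eval_mul, Polynomial.eval_C, Polynomial.eval_pow, Polynomial.eval_X]
  ring
end
end

section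
/- Let p be a prime, s ∈ ℂ with 0 < |s| < 1, and m ∈ ℕ finite, and assume Δ_s^{(m)} + Δ_s^{(∞)} > 0. Define pseudometrics ρ_m(x,y) = |Υ_s^{(m)}(x) − Υ_s^{(m)}(y)| and ρ_∞(x,y) = |Υ_s^{(∞)}(x) − Υ_s^{(∞)}(y)| on ℚ_p, and let κ_{m,∞} be their divergence. Then κ_{m,∞} < 4π·p^{−m} / ((1−|s|)·(Δ_s^{(m)} + Δ_s^{(∞)})). -/
open scoped ENNReal MeasureTheory

noncomputable section

variable {p : ℕ} [Fact p.Prime]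

open Complex in
lemma exp_I_dist (a b : ℝ) :
    ‖Complex.exp ((a:ℂ) * Complex.I) - Complex.exp ((b:ℂ) * Complex.I)‖ ≤ |a - b| := by
  have key : ∀ t : ℝ, ‖Complex.exp ((t:ℂ) * Complex.I) - 1‖ ≤ |t| := by
    intro t
    have he : Complex.exp ((t:ℂ) * Complex.I) - 1
        = ((Real.cos t - 1 : ℝ) : ℂ) + ((Real.sin t : ℝ) : ℂ) * Complex.I := by
      rw [Complex.exp_mul_I, ← Complex.ofReal_cos, ← Complex.ofReal_sin]
      push_cast; ring
    rw [he, Complex.norm_add_mul_I]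
    have hcalc : (Real.cos t - 1) ^ 2 + Real.sin t ^ 2 = 2 - 2 * Real.cos t := by
      nlinarith [Real.sin_sq_add_cos_sq t]
    rw [hcalc]
    have hsq : |Real.sin (t/2)| ^ 2 = (1 - Real.cos t) / 2 := by
      rw [Real.abs_sin_half]
      exact Real.sq_sqrt (by nlinarith [Real.cos_le_one t])
    have h2 : 2 - 2 * Real.cos t = (2 * |Real.sin (t/2)|) ^ 2 := by nlinarith
    rw [h2, Real.sqrt_sq (by positivity)]
    calc 2 * |Real.sin (t/2)| ≤ 2 * |t/2| := by
          have := Real.abs_sin_le_abs (x := t/2); linarith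
      _ = |t| := by rw [abs_div]; simp; ring
  have hfac : Complex.exp ((a:ℂ) * Complex.I) - Complex.exp ((b:ℂ) * Complex.I)
      = Complex.exp ((b:ℂ) * Complex.I) * (Complex.exp (((a - b : ℝ):ℂ) * Complex.I) - 1) := by
    rw [mul_sub, mul_one, ← Complex.exp_add]
    push_cast; ring_nf
  rw [hfac, norm_mul, Complex.norm_exp_ofReal_mul_I, one_mul]
  exact key _

lemma summable_int_aux {E : Type*} [NormedAddCommGroup E] [CompleteSpace E] (f : ℤ → E) {r : ℝ}
    (hr0 : 0 ≤ r) (hr1 : r < 1) (C : ℝ) (N : ℤ) (h0 : ∀ n < N, f n = 0)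
    (hb : ∀ n : ℤ, 0 ≤ n → ‖f n‖ ≤ C * r ^ n.toNat) : Summable f := by
  apply Summable.of_nat_of_neg
  · apply Summable.of_norm_bounded (g := fun n : ℕ => C * r ^ n)
      ((summable_geometric_of_lt_one hr0 hr1).mul_left C)
    intro n
    simpa using hb n (Int.ofNat_nonneg n)
  · apply summable_of_ne_finset_zero (s := Finset.range ((-N).toNat + 1))
    intro n hn
    simp only [Finset.mem_range, not_lt] at hn
    apply h0
    have h2 : -N ≤ ((-N).toNat : ℤ) := Int.self_le_toNat _
    omega

variable {p : ℕ} [Fact p.Prime]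

lemma one_lt_p' (p : ℕ) [Fact p.Prime] : (1 : ℝ) < p := by exact_mod_cast (Fact.out : p.Prime).one_lt

lemma norm_term_le (c : ℤ) (n : ℤ) :
    ‖(c : ℚ_[p]) * (p : ℚ_[p]) ^ n‖ ≤ (p : ℝ) ^ (-n) := by
  rw [norm_mul, norm_zpow, Padic.norm_p]
  calc ‖(c : ℚ_[p])‖ * ((p:ℝ))⁻¹ ^ n ≤ 1 * ((p:ℝ))⁻¹ ^ n := by
        apply mul_le_mul_of_nonneg_right (Padic.norm_int_le_one c)
        positivity
    _ = (p : ℝ) ^ (-n) := by rw [one_mul, inv_zpow, ← zpow_neg]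

lemma summable_digitSeries (c : ℤ → ℤ) (N : ℤ) (h0 : ∀ n < N, c n = 0) :
    Summable (fun n : ℤ => (c n : ℚ_[p]) * (p : ℚ_[p]) ^ n) := by
  have hp1 : (1:ℝ) < p := one_lt_p' p
  apply summable_int_aux _ (r := (p:ℝ)⁻¹) (by positivity) (by
      rw [inv_lt_one_iff₀]; right; exact hp1) 1 N
  · intro n hn; simp [h0 n hn]
  · intro n hn
    rw [one_mul]
    calc ‖(c n : ℚ_[p]) * (p : ℚ_[p]) ^ n‖ ≤ (p:ℝ) ^ (-n) := norm_term_le _ _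
      _ = ((p:ℝ)⁻¹) ^ n := by rw [inv_zpow, ← zpow_neg]
      _ = ((p:ℝ)⁻¹) ^ n.toNat := by
          rw [← zpow_natCast ((p:ℝ)⁻¹), Int.toNat_of_nonneg hn]

/-- Norm of a digit-type series with lowest nonzero coefficient at `n₀`. -/
lemma norm_tsum_digitSeries (c : ℤ → ℤ) (hlt : ∀ n, |c n| < p) (n₀ : ℤ)
    (h0 : ∀ n < n₀, c n = 0) (hne : c n₀ ≠ 0) :
    ‖∑' n : ℤ, (c n : ℚ_[p]) * (p : ℚ_[p]) ^ n‖ = (p : ℝ) ^ (-n₀) := by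
  classical
  have hp1 : (1:ℝ) < p := one_lt_p' p
  have hsum := summable_digitSeries (p := p) c n₀ h0
  rw [Summable.tsum_eq_add_tsum_ite hsum n₀]
  have hhead : ‖(c n₀ : ℚ_[p]) * (p : ℚ_[p]) ^ n₀‖ = (p:ℝ) ^ (-n₀) := by
    have hdvd : ¬ ((p:ℤ) ∣ c n₀) := by
      intro hd
      have h1 := Int.le_of_dvd (abs_pos.mpr hne) ((dvd_abs _ _).mpr hd)
      have h2 := hlt n₀
      omega
    have h1 : ‖((c n₀ : ℤ) : ℚ_[p])‖ = 1 := by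
      refine le_antisymm (Padic.norm_int_le_one _) ?_
      by_contra hlt'
      exact hdvd (Padic.norm_intCast_lt_one_iff.mp (lt_of_not_ge hlt'))
    rw [norm_mul, h1, one_mul, norm_zpow, Padic.norm_p, inv_zpow, ← zpow_neg]
  have htail : ‖∑' n : ℤ, (if n = n₀ then 0 else (c n : ℚ_[p]) * (p : ℚ_[p]) ^ n)‖
      ≤ (p:ℝ) ^ (-(n₀+1)) := by
    apply IsUltrametricDist.norm_tsum_le_of_forall_le_of_nonneg (by positivity)
    intro n
    by_cases hn : n = n₀
    · simp [hn]; positivity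
    · simp only [hn, if_false]
      rcases lt_or_ge n n₀ with h | h
      · simp [h0 n h]; positivity
      · have hn1 : n₀ + 1 ≤ n := by omega
        calc ‖(c n : ℚ_[p]) * (p : ℚ_[p]) ^ n‖ ≤ (p:ℝ) ^ (-n) := norm_term_le _ _
          _ ≤ (p:ℝ) ^ (-(n₀+1)) := zpow_le_zpow_right₀ hp1.le (by omega)
  have hstrict : (p:ℝ) ^ (-(n₀+1)) < (p:ℝ) ^ (-n₀) := zpow_lt_zpow_right₀ hp1 (by omega)
  rw [IsUltrametricDist.norm_add_eq_max_of_norm_ne_norm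
    (by rw [hhead]; exact fun h => absurd (h ▸ htail) (not_le.mpr hstrict)), hhead]
  exact max_eq_left (htail.trans hstrict.le)

namespace PadicDigits

variable (D : PadicDigits p)

lemma exists_digit_bound (x : ℚ_[p]) : ∃ N : ℤ, ∀ n < N, D.digit x n = 0 := by
  by_cases hx : x = 0
  · exact ⟨0, fun n _ => hx ▸ D.digit_zero n⟩
  · exact ⟨x.valuation, fun n hn => D.digit_eq_zero_of_lt x hx n hn⟩

lemma summable_digit_expansion (x : ℚ_[p]) :
    Summable (fun n : ℤ => ((D.digit x n : ℤ) : ℚ_[p]) * (p : ℚ_[p]) ^ n) := by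
  obtain ⟨N, hN⟩ := D.exists_digit_bound x
  exact summable_digitSeries _ N (fun n hn => by simp [hN n hn])

/-- The difference of two `p`-adic numbers as a digit series. -/
lemma sub_eq_tsum (x y : ℚ_[p]) :
    x - y = ∑' n : ℤ, (((D.digit x n : ℤ) - (D.digit y n : ℤ) : ℤ) : ℚ_[p]) * (p : ℚ_[p]) ^ n := by
  have hx := D.summable_digit_expansion x
  have hy := D.summable_digit_expansion y
  calc x - y = (∑' n : ℤ, ((D.digit x n : ℤ) : ℚ_[p]) * (p : ℚ_[p]) ^ n)
        - ∑' n : ℤ, ((D.digit y n : ℤ) : ℚ_[p]) * (p : ℚ_[p]) ^ n := by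
        push_cast
        rw [← D.expansion x, ← D.expansion y]
    _ = ∑' n : ℤ, (((D.digit x n : ℤ) : ℚ_[p]) * (p : ℚ_[p]) ^ n
          - ((D.digit y n : ℤ) : ℚ_[p]) * (p : ℚ_[p]) ^ n) := (Summable.tsum_sub hx hy).symm
    _ = _ := by
        congr 1; funext n; push_cast; ring

/-- Uniqueness of digit expansions. -/
lemma digit_unique (d : ℤ → ℕ) (hd : ∀ n, d n < p) (N : ℤ) (h0 : ∀ n < N, d n = 0)
    (x : ℚ_[p]) (hx : x = ∑' n : ℤ, ((d n : ℤ) : ℚ_[p]) * (p : ℚ_[p]) ^ n) :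
    ∀ n, D.digit x n = d n := by
  classical
  by_contra hcon
  push_neg at hcon
  obtain ⟨n₁, hn₁⟩ := hcon
  set c : ℤ → ℤ := fun n => (d n : ℤ) - (D.digit x n : ℤ) with hc
  obtain ⟨Nx, hNx⟩ := D.exists_digit_bound x
  have hc0 : ∀ n < min N Nx, c n = 0 := by
    intro n hn
    simp only [hc]
    rw [h0 n (lt_of_lt_of_le hn (min_le_left _ _)), hNx n (lt_of_lt_of_le hn (min_le_right _ _))]
    simp
  have hbdd : ∃ b : ℤ, ∀ z : ℤ, c z ≠ 0 → b ≤ z :=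
    ⟨min N Nx, fun z hz => le_of_not_gt fun hzb => hz (hc0 z hzb)⟩
  have hinh : ∃ z : ℤ, c z ≠ 0 := by
    refine ⟨n₁, fun h => hn₁ ?_⟩
    simp only [hc, sub_eq_zero] at h
    exact_mod_cast h.symm
  obtain ⟨n₀, hn₀, hleast⟩ := Int.exists_least_of_bdd hbdd hinh
  have hzero : (∑' n : ℤ, ((c n : ℤ) : ℚ_[p]) * (p : ℚ_[p]) ^ n) = 0 := by
    have hsd : Summable (fun n : ℤ => ((d n : ℤ) : ℚ_[p]) * (p : ℚ_[p]) ^ n) :=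
      summable_digitSeries _ N (fun n hn => by simp [h0 n hn])
    have hsx := D.summable_digit_expansion x
    calc (∑' n : ℤ, ((c n : ℤ) : ℚ_[p]) * (p : ℚ_[p]) ^ n)
        = ∑' n : ℤ, (((d n : ℤ) : ℚ_[p]) * (p : ℚ_[p]) ^ n
            - ((D.digit x n : ℤ) : ℚ_[p]) * (p : ℚ_[p]) ^ n) := by
          congr 1; funext n; simp only [hc]; push_cast; ring
      _ = (∑' n : ℤ, ((d n : ℤ) : ℚ_[p]) * (p : ℚ_[p]) ^ n)
            - ∑' n : ℤ, ((D.digit x n : ℤ) : ℚ_[p]) * (p : ℚ_[p]) ^ n := Summable.tsum_sub hsd hsx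
      _ = x - x := by
          push_cast
          push_cast at hx
          rw [← hx, ← D.expansion x]
      _ = 0 := sub_self x
  have hlt : ∀ n, |c n| < p := by
    intro n
    have h1 : (d n : ℤ) < p := by exact_mod_cast hd n
    have h2 : (D.digit x n : ℤ) < p := by exact_mod_cast D.digit_lt x n
    have h3 : 0 ≤ (d n : ℤ) := Int.ofNat_nonneg _
    have h4 : 0 ≤ (D.digit x n : ℤ) := Int.ofNat_nonneg _
    rw [abs_lt]
    constructor <;> simp only [hc] <;> omega
  have hlow : ∀ n < n₀, c n = 0 := by
    intro n hn
    by_contra h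
    exact absurd (hleast n h) (not_le.mpr hn)
  have := norm_tsum_digitSeries c hlt n₀ hlow hn₀
  rw [hzero, norm_zero] at this
  have hppos : (0:ℝ) < (p:ℝ) ^ (-n₀) := by
    have := one_lt_p' p
    positivity
  exact absurd this.symm (ne_of_gt hppos)

end PadicDigits

namespace PadicDigits
variable (D : PadicDigits p)

/-- Digits at negative positions agree when the difference has norm at most 1. -/
lemma digit_eq_of_norm_sub_le_one {x y : ℚ_[p]} (h : ‖x - y‖ ≤ 1) :
    ∀ n < (0:ℤ), D.digit x n = D.digit y n := by
  classical
  by_contra hcon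
  push_neg at hcon
  obtain ⟨n₁, hn₁, hne₁⟩ := hcon
  set c : ℤ → ℤ := fun n => (D.digit x n : ℤ) - (D.digit y n : ℤ) with hc
  obtain ⟨Nx, hNx⟩ := D.exists_digit_bound x
  obtain ⟨Ny, hNy⟩ := D.exists_digit_bound y
  have hbdd : ∃ b : ℤ, ∀ z : ℤ, (z < 0 ∧ c z ≠ 0) → b ≤ z := by
    refine ⟨min Nx Ny, fun z hz => le_of_not_gt fun hzb => hz.2 ?_⟩
    simp only [hc]
    rw [hNx z (lt_of_lt_of_le hzb (min_le_left _ _)),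
      hNy z (lt_of_lt_of_le hzb (min_le_right _ _))]
    simp
  have hinh : ∃ z : ℤ, z < 0 ∧ c z ≠ 0 := by
    refine ⟨n₁, hn₁, fun h' => hne₁ ?_⟩
    simp only [hc, sub_eq_zero] at h'
    exact_mod_cast h'
  obtain ⟨n₀, ⟨hn₀neg, hn₀⟩, hleast⟩ := Int.exists_least_of_bdd hbdd hinh
  have hlow : ∀ n < n₀, c n = 0 := by
    intro n hn
    by_contra h'
    exact absurd (hleast n ⟨by omega, h'⟩) (not_le.mpr hn)
  have hlt : ∀ n, |c n| < p := by
    intro n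
    have h1 : (D.digit x n : ℤ) < p := by exact_mod_cast D.digit_lt x n
    have h2 : (D.digit y n : ℤ) < p := by exact_mod_cast D.digit_lt y n
    have h3 : 0 ≤ (D.digit x n : ℤ) := Int.ofNat_nonneg _
    have h4 : 0 ≤ (D.digit y n : ℤ) := Int.ofNat_nonneg _
    rw [abs_lt]
    constructor <;> simp only [hc] <;> omega
  have hnorm : ‖x - y‖ = (p:ℝ) ^ (-n₀) := by
    rw [D.sub_eq_tsum x y]
    exact norm_tsum_digitSeries c hlt n₀ hlow hn₀
  have hgt : (1:ℝ) < (p:ℝ) ^ (-n₀) := one_lt_zpow₀ (one_lt_p' p) (by omega)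
  rw [hnorm] at h
  exact absurd h (not_le.mpr hgt)

/-- Digits shift under multiplication by a power of `p`. -/
lemma digit_shift (x : ℚ_[p]) (v : ℤ) (n : ℤ) :
    D.digit ((p : ℚ_[p]) ^ v * x) n = D.digit x (n - v) := by
  obtain ⟨Nx, hNx⟩ := D.exists_digit_bound x
  have hp0 : (p : ℚ_[p]) ≠ 0 := by
    exact_mod_cast (Nat.Prime.ne_zero (Fact.out : p.Prime))
  have hexp : (p : ℚ_[p]) ^ v * x
      = ∑' n : ℤ, ((D.digit x (n - v) : ℤ) : ℚ_[p]) * (p : ℚ_[p]) ^ n := by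
    have h1 : (p : ℚ_[p]) ^ v * x
        = ∑' n : ℤ, ((D.digit x n : ℤ) : ℚ_[p]) * (p : ℚ_[p]) ^ (n + v) := by
      calc (p : ℚ_[p]) ^ v * x
          = ∑' n : ℤ, (p : ℚ_[p]) ^ v * (((D.digit x n : ℤ) : ℚ_[p]) * (p : ℚ_[p]) ^ n) := by
            rw [tsum_mul_left]
            congr 1
            push_cast
            exact D.expansion x
        _ = _ := by
            congr 1; funext n
            rw [zpow_add₀ hp0]
            ring
    rw [h1, ← (Equiv.addRight v).tsum_eq
      (fun n => ((D.digit x (n - v) : ℤ) : ℚ_[p]) * (p : ℚ_[p]) ^ n)]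
    congr 1
    funext n
    simp
  exact D.digit_unique (fun j => D.digit x (j - v)) (fun j => D.digit_lt x _)
    (Nx + v) (fun j hj => hNx _ (by omega)) _ hexp n

end PadicDigits

namespace PadicDigits
variable (D : PadicDigits p)

lemma summable_digit_real (x : ℚ_[p]) (n : ℤ) :
    Summable (fun k : ℕ => (D.digit x (n - k) : ℝ) / (p : ℝ) ^ k) := by
  have hp1 : (1:ℝ) < p := one_lt_p' p
  refine Summable.of_nonneg_of_le (fun k => by positivity) (fun k => ?_)
    (((summable_geometric_of_lt_one (r := (p:ℝ)⁻¹) (by positivity)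
      (by rw [inv_lt_one_iff₀]; right; exact hp1))).mul_left ((p:ℝ) - 1))
  rw [div_eq_mul_inv, ← inv_pow]
  apply mul_le_mul_of_nonneg_right _ (by positivity)
  have h2 : (D.digit x (n - k) : ℝ) + 1 ≤ (p:ℝ) := by exact_mod_cast D.digit_lt x (n - k)
  linarith

lemma summable_digit_real_ite (x : ℚ_[p]) (n : ℤ) (P : ℕ → Prop) [DecidablePred P] :
    Summable (fun k : ℕ => if P k then (D.digit x (n - k) : ℝ) / (p : ℝ) ^ k else 0) := by
  refine Summable.of_nonneg_of_le (fun k => by positivity) (fun k => ?_)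
    (D.summable_digit_real x n)
  by_cases h : P k
  · simp [h]
  · simp [h]; positivity

lemma chi_congr {x y : ℚ_[p]} {n : ℤ} (M : ℕ∞) (h : ∀ j ≤ n, D.digit x j = D.digit y j) :
    chiFn D M x n = chiFn D M y n := by
  unfold chiFn
  have he : (fun k : ℕ => if (k : ℕ∞) ≤ M then (D.digit x (n - k) : ℝ) / (p : ℝ) ^ k else 0)
      = (fun k : ℕ => if (k : ℕ∞) ≤ M then (D.digit y (n - k) : ℝ) / (p : ℝ) ^ k else 0) := by
    funext k
    rw [h (n - k) (by omega)]
  rw [he]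

lemma chi_eq_one {x : ℚ_[p]} {n : ℤ} (M : ℕ∞) (h : ∀ j ≤ n, D.digit x j = 0) :
    chiFn D M x n = 1 := by
  unfold chiFn
  have he : (fun k : ℕ => if (k : ℕ∞) ≤ M then (D.digit x (n - k) : ℝ) / (p : ℝ) ^ k else 0)
      = (fun _ : ℕ => (0:ℝ)) := by
    funext k
    simp [h (n - k) (by omega)]
  rw [he]
  simp

lemma chi_shift (M : ℕ∞) (x : ℚ_[p]) (v n : ℤ) :
    chiFn D M ((p : ℚ_[p]) ^ v * x) n = chiFn D M x (n - v) := by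
  unfold chiFn
  have he : (fun k : ℕ => if (k : ℕ∞) ≤ M then (D.digit ((p : ℚ_[p]) ^ v * x) (n - k) : ℝ)
        / (p : ℝ) ^ k else 0)
      = (fun k : ℕ => if (k : ℕ∞) ≤ M then (D.digit x (n - v - k) : ℝ) / (p : ℝ) ^ k else 0) := by
    funext k
    rw [D.digit_shift x v (n - k), sub_right_comm]
  rw [he]

lemma abs_chi (M : ℕ∞) (x : ℚ_[p]) (n : ℤ) : ‖chiFn D M x n‖ = 1 :=
  Complex.norm_exp_ofReal_mul_I _

lemma digit_le (x : ℚ_[p]) (n : ℤ) : (D.digit x n : ℝ) ≤ (p:ℝ) - 1 := by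
  have h2 : (D.digit x n : ℝ) + 1 ≤ (p:ℝ) := by exact_mod_cast D.digit_lt x n
  linarith

lemma inv_p_lt_one : ((p:ℝ))⁻¹ < 1 := by
  rw [inv_lt_one_iff₀]; right; exact one_lt_p' p

lemma summable_geom_p : Summable (fun k : ℕ => ((p:ℝ)⁻¹) ^ k) :=
  summable_geometric_of_lt_one (by positivity) (inv_p_lt_one (p := p))

lemma geom_tail_sum (m : ℕ) :
    ∑' k : ℕ, (if m + 1 ≤ k then ((p:ℝ) - 1) * ((p:ℝ)⁻¹) ^ k else 0)
      = (p:ℝ) ^ (-(m:ℤ)) := by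
  classical
  have hp1 : (1:ℝ) < p := one_lt_p' p
  have hinj : Function.Injective (fun j : ℕ => m + 1 + j) := add_right_injective _
  have hsupp : Function.support
      (fun k : ℕ => if m + 1 ≤ k then ((p:ℝ) - 1) * ((p:ℝ)⁻¹) ^ k else 0)
      ⊆ Set.range (fun j : ℕ => m + 1 + j) := by
    intro k hk
    rcases le_or_gt (m + 1) k with h | h
    · exact ⟨k - (m + 1), by show m + 1 + (k - (m+1)) = k; omega⟩
    · exact absurd (if_neg (by omega : ¬ m + 1 ≤ k)) hk
  rw [← hinj.tsum_eq hsupp]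
  have he : (fun j : ℕ => if m + 1 ≤ (fun j : ℕ => m + 1 + j) j
        then ((p:ℝ) - 1) * ((p:ℝ)⁻¹) ^ ((fun j : ℕ => m + 1 + j) j) else 0)
      = (fun j : ℕ => (((p:ℝ) - 1) * ((p:ℝ)⁻¹) ^ (m + 1)) * ((p:ℝ)⁻¹) ^ j) := by
    funext j
    rw [if_pos (by omega : m + 1 ≤ m + 1 + j), pow_add]
    ring
  rw [he, tsum_mul_left,
    tsum_geometric_of_lt_one (by positivity) (inv_p_lt_one (p := p))]
  have hpne : (p:ℝ) ≠ 0 := by positivity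
  have hpm1 : (p:ℝ) - 1 ≠ 0 := by linarith
  rw [zpow_neg, zpow_natCast]
  field_simp
  rw [div_pow, one_pow, pow_succ]; field_simp

lemma chi_tail (m : ℕ) (x : ℚ_[p]) (n : ℤ) :
    ‖chiFn D (m : ℕ∞) x n - chiFn D ⊤ x n‖
      ≤ 2 * Real.pi / p * (p : ℝ) ^ (-(m:ℤ)) := by
  classical
  have hp1 : (1:ℝ) < p := one_lt_p' p
  have hπ := Real.pi_pos
  have hsa : Summable (fun k : ℕ => (D.digit x (n - k) : ℝ) / (p : ℝ) ^ k) :=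
    D.summable_digit_real x n
  have hsm : Summable (fun k : ℕ =>
      if (k : ℕ∞) ≤ (m:ℕ∞) then (D.digit x (n - k) : ℝ) / (p : ℝ) ^ k else 0) :=
    D.summable_digit_real_ite x n _
  have hsl : Summable (fun k : ℕ =>
      if m + 1 ≤ k then (D.digit x (n - k) : ℝ) / (p : ℝ) ^ k else 0) :=
    D.summable_digit_real_ite x n _
  have htop : (∑' k : ℕ, if (k : ℕ∞) ≤ (⊤:ℕ∞) then (D.digit x (n - k) : ℝ) / (p : ℝ) ^ k else 0)
      = ∑' k : ℕ, (D.digit x (n - k) : ℝ) / (p : ℝ) ^ k :=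
    tsum_congr (fun k => by simp)
  have hdiff : (∑' k : ℕ, (D.digit x (n - k) : ℝ) / (p : ℝ) ^ k)
      - (∑' k : ℕ, if (k : ℕ∞) ≤ (m:ℕ∞) then (D.digit x (n - k) : ℝ) / (p : ℝ) ^ k else 0)
      = ∑' k : ℕ, (if m + 1 ≤ k then (D.digit x (n - k) : ℝ) / (p : ℝ) ^ k else 0) := by
    rw [← Summable.tsum_sub hsa hsm]
    congr 1; funext k
    by_cases h : (k : ℕ∞) ≤ (m:ℕ∞)
    · have hk : k ≤ m := by exact_mod_cast h
      rw [if_pos h, if_neg (by omega : ¬ m + 1 ≤ k), sub_self]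
    · have hk : m + 1 ≤ k := by
        by_contra hc
        exact h (by exact_mod_cast (by omega : k ≤ m))
      rw [if_neg h, if_pos hk, sub_zero]
  have hsg : Summable (fun k : ℕ => if m + 1 ≤ k then ((p:ℝ) - 1) * ((p:ℝ)⁻¹) ^ k else 0) := by
    refine Summable.of_nonneg_of_le (fun k => ?_) (fun k => ?_)
      ((summable_geom_p (p := p)).mul_left ((p:ℝ) - 1))
    · by_cases h : m + 1 ≤ k
      · rw [if_pos h]
        exact mul_nonneg (by linarith) (by positivity)
      · rw [if_neg h]
    · by_cases h : m + 1 ≤ k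
      · rw [if_pos h]
      · rw [if_neg h]
        exact mul_nonneg (by linarith) (by positivity)
  have hle : ∀ k : ℕ, (if m + 1 ≤ k then (D.digit x (n - k) : ℝ) / (p : ℝ) ^ k else 0)
      ≤ (if m + 1 ≤ k then ((p:ℝ) - 1) * ((p:ℝ)⁻¹) ^ k else 0) := by
    intro k
    by_cases h : m + 1 ≤ k
    · rw [if_pos h, if_pos h, div_eq_mul_inv, ← inv_pow]
      exact mul_le_mul_of_nonneg_right (D.digit_le x (n - k)) (by positivity)
    · rw [if_neg h, if_neg h]
  have htail_le : (∑' k : ℕ, if m + 1 ≤ k then (D.digit x (n - k) : ℝ) / (p : ℝ) ^ k else 0)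
      ≤ (p:ℝ) ^ (-(m:ℤ)) := by
    rw [← geom_tail_sum (p := p) m]
    exact Summable.tsum_le_tsum hle hsl hsg
  have htail_nonneg :
      0 ≤ ∑' k : ℕ, (if m + 1 ≤ k then (D.digit x (n - k) : ℝ) / (p : ℝ) ^ k else 0) := by
    apply tsum_nonneg
    intro k
    by_cases h : m + 1 ≤ k
    · rw [if_pos h]; positivity
    · rw [if_neg h]
  unfold chiFn
  refine (exp_I_dist _ _).trans ?_
  rw [← mul_sub, abs_mul, abs_of_nonneg (by positivity : (0:ℝ) ≤ 2 * Real.pi / p)]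
  apply mul_le_mul_of_nonneg_left _ (by positivity)
  rw [abs_sub_comm, htop, hdiff]
  rw [abs_of_nonneg htail_nonneg]
  exact htail_le

end PadicDigits

namespace PadicDigits
variable (D : PadicDigits p) {s : ℂ}

lemma summable_g (hs1 : ‖s‖ < 1) (M : ℕ∞) (x : ℚ_[p]) :
    Summable (fun n : ℤ => s ^ n * (chiFn D M x n - if n < 0 then 1 else 0)) := by
  obtain ⟨N, hN⟩ := D.exists_digit_bound x
  apply summable_int_aux _ (norm_nonneg s) hs1 1 (min N 0)
  · intro n hn
    have hneg : n < 0 := lt_of_lt_of_le hn (min_le_right _ _)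
    rw [if_pos hneg, D.chi_eq_one M (fun j hj => hN j (by
      have := lt_of_lt_of_le hn (min_le_left _ _); omega)), sub_self, mul_zero]
  · intro n hn
    rw [if_neg (by omega : ¬ n < 0), sub_zero, one_mul, norm_mul, norm_zpow]
    have h1 : ‖chiFn D M x n‖ = 1 := D.abs_chi M x n
    rw [h1, mul_one, ← zpow_natCast (‖s‖) n.toNat,
      Int.toNat_of_nonneg hn]

lemma upsilon_sub (hs1 : ‖s‖ < 1) (M : ℕ∞) (x y : ℚ_[p]) :
    Upsilon D M s x - Upsilon D M s y
      = ∑' n : ℤ, s ^ n * (chiFn D M x n - chiFn D M y n) := by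
  rw [Upsilon, Upsilon, ← Summable.tsum_sub (D.summable_g hs1 M x) (D.summable_g hs1 M y)]
  congr 1
  funext n
  ring

lemma summable_g_sub (hs1 : ‖s‖ < 1) (M : ℕ∞) (x y : ℚ_[p]) :
    Summable (fun n : ℤ => s ^ n * (chiFn D M x n - chiFn D M y n)) := by
  have := (D.summable_g hs1 M x).sub (D.summable_g hs1 M y)
  refine this.congr (fun n => ?_)
  ring

lemma upsilon_scaling (hs0 : s ≠ 0) (hs1 : ‖s‖ < 1) (M : ℕ∞) (x y : ℚ_[p]) (v : ℤ) :
    Upsilon D M s ((p : ℚ_[p]) ^ v * x) - Upsilon D M s ((p : ℚ_[p]) ^ v * y)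
      = s ^ v * (Upsilon D M s x - Upsilon D M s y) := by
  rw [D.upsilon_sub hs1 M, D.upsilon_sub hs1 M, ← tsum_mul_left]
  have he : (fun n : ℤ => s ^ n * (chiFn D M ((p : ℚ_[p]) ^ v * x) n
        - chiFn D M ((p : ℚ_[p]) ^ v * y) n))
      = (fun n : ℤ => s ^ n * (chiFn D M x (n - v) - chiFn D M y (n - v))) := by
    funext n
    rw [D.chi_shift M x v n, D.chi_shift M y v n]
  rw [he]
  rw [← (Equiv.addRight v).tsum_eq
    (fun n : ℤ => s ^ n * (chiFn D M x (n - v) - chiFn D M y (n - v)))]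
  congr 1
  funext n
  simp only [Equiv.coe_addRight, add_sub_cancel_right]
  rw [zpow_add₀ hs0]
  ring

end PadicDigits

namespace PadicDigits
variable (D : PadicDigits p) {s : ℂ}

lemma w_bound (hs0 : s ≠ 0) (hs1 : ‖s‖ < 1) (m : ℕ) {x y : ℚ_[p]}
    (hxy : ‖x - y‖ ≤ 1) :
    ‖(Upsilon D (m:ℕ∞) s x - Upsilon D (m:ℕ∞) s y)
        - (Upsilon D ⊤ s x - Upsilon D ⊤ s y)‖
      ≤ (4 * Real.pi / p * (p:ℝ) ^ (-(m:ℤ))) * (1 - ‖s‖)⁻¹ := by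
  have hπ := Real.pi_pos
  have hp1 : (1:ℝ) < p := one_lt_p' p
  set C : ℝ := 4 * Real.pi / p * (p:ℝ) ^ (-(m:ℤ)) with hC
  have hC0 : 0 ≤ C := by positivity
  set e : ℤ → ℂ := fun n => s ^ n * ((chiFn D (m:ℕ∞) x n - chiFn D (m:ℕ∞) y n)
      - (chiFn D ⊤ x n - chiFn D ⊤ y n)) with hee
  have hsum : (Upsilon D (m:ℕ∞) s x - Upsilon D (m:ℕ∞) s y)
      - (Upsilon D ⊤ s x - Upsilon D ⊤ s y) = ∑' n : ℤ, e n := by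
    rw [D.upsilon_sub hs1 (m:ℕ∞) x y, D.upsilon_sub hs1 ⊤ x y,
      ← Summable.tsum_sub (D.summable_g_sub hs1 (m:ℕ∞) x y) (D.summable_g_sub hs1 ⊤ x y)]
    congr 1
    funext n
    simp only [hee]
    ring
  have he0 : ∀ n : ℤ, n < 0 → e n = 0 := by
    intro n hn
    have hagree : ∀ j ≤ n, D.digit x j = D.digit y j := fun j hj =>
      D.digit_eq_of_norm_sub_le_one hxy j (by omega)
    simp only [hee]
    rw [D.chi_congr (m:ℕ∞) hagree, D.chi_congr ⊤ hagree]
    simp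
  have hebound : ∀ n : ℤ, 0 ≤ n → ‖e n‖ ≤ C * (‖s‖) ^ n.toNat := by
    intro n hn
    simp only [hee]
    rw [norm_mul, norm_zpow]
    have h1 : ‖(chiFn D (m:ℕ∞) x n - chiFn D (m:ℕ∞) y n)
        - (chiFn D ⊤ x n - chiFn D ⊤ y n)‖ ≤ C := by
      have hre : (chiFn D (m:ℕ∞) x n - chiFn D (m:ℕ∞) y n)
          - (chiFn D ⊤ x n - chiFn D ⊤ y n)
          = (chiFn D (m:ℕ∞) x n - chiFn D ⊤ x n) - (chiFn D (m:ℕ∞) y n - chiFn D ⊤ y n) := by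
        ring
      rw [hre]
      calc ‖_‖ ≤ ‖chiFn D (m:ℕ∞) x n - chiFn D ⊤ x n‖
            + ‖chiFn D (m:ℕ∞) y n - chiFn D ⊤ y n‖ := by
            exact norm_sub_le _ _
        _ ≤ 2 * Real.pi / p * (p:ℝ) ^ (-(m:ℤ)) + 2 * Real.pi / p * (p:ℝ) ^ (-(m:ℤ)) :=
            add_le_add (D.chi_tail m x n) (D.chi_tail m y n)
        _ = C := by rw [hC]; ring
    calc ‖s‖ ^ n * ‖_‖
        ≤ ‖s‖ ^ n * C := by
          apply mul_le_mul_of_nonneg_left h1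
          positivity
      _ = C * ‖s‖ ^ n.toNat := by
          rw [mul_comm, ← zpow_natCast (‖s‖) n.toNat, Int.toNat_of_nonneg hn]
  -- reduce to a sum over ℕ
  have hinj : Function.Injective (fun k : ℕ => (k : ℤ)) := Nat.cast_injective
  have hsupp : Function.support e ⊆ Set.range (fun k : ℕ => (k : ℤ)) := by
    intro n hn
    rcases lt_or_ge n 0 with h | h
    · exact absurd (he0 n h) hn
    · exact ⟨n.toNat, Int.toNat_of_nonneg h⟩
  have hkey : ∑' n : ℤ, e n = ∑' k : ℕ, e k := (hinj.tsum_eq hsupp).symm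
  rw [hsum, hkey]
  have hnormsum : Summable (fun k : ℕ => ‖e (k:ℤ)‖) := by
    refine Summable.of_nonneg_of_le (fun k => norm_nonneg _) (fun k => ?_)
      ((summable_geometric_of_lt_one (norm_nonneg s) hs1).mul_left C)
    have := hebound k (Int.ofNat_nonneg k)
    simpa using this
  calc ‖∑' k : ℕ, e k‖ ≤ ∑' k : ℕ, ‖e (k:ℤ)‖ := norm_tsum_le_tsum_norm hnormsum
    _ ≤ ∑' k : ℕ, C * (‖s‖) ^ k := by
        apply Summable.tsum_le_tsum _ hnormsum
          ((summable_geometric_of_lt_one (norm_nonneg s) hs1).mul_left C)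
        intro k
        simpa using hebound k (Int.ofNat_nonneg k)
    _ = C * (1 - ‖s‖)⁻¹ := by
        rw [tsum_mul_left, tsum_geometric_of_lt_one (norm_nonneg s) hs1]

lemma delta_le (M : ℕ∞) (s : ℂ) {x y : ℚ_[p]} (hxy : ‖x - y‖ = 1) :
    Delta D M s ≤ ‖Upsilon D M s x - Upsilon D M s y‖ := by
  apply csInf_le
  · exact ⟨0, fun r ⟨a, b, hab, hr⟩ => hr ▸ norm_nonneg _⟩
  · exact ⟨x, y, hxy, rfl⟩

end PadicDigits


/-- Let `0 < |s| < 1`, `m ∈ ℕ` finite, and `Δ_s^{(m)} + Δ_s^{(∞)} > 0`. For the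
pseudometrics `ρ_m(x,y) = |Υ_s^{(m)}(x) − Υ_s^{(m)}(y)|` and
`ρ_∞(x,y) = |Υ_s^{(∞)}(x) − Υ_s^{(∞)}(y)|` on `ℚ_p`, their divergence satisfies
`κ_{m,∞} < 4π·p^{−m} / ((1−|s|)·(Δ_s^{(m)} + Δ_s^{(∞)}))`. -/
theorem divergence_rho_m_infty_lt {p : ℕ} [Fact p.Prime] (D : PadicDigits p)
    (m : ℕ) (s : ℂ) (hs0 : 0 < ‖s‖) (hs1 : ‖s‖ < 1)
    (hΔ : 0 < Delta D (m : ℕ∞) s + Delta D ⊤ s) :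
    divergence
        (fun x y : ℚ_[p] => ‖Upsilon D (m : ℕ∞) s x - Upsilon D (m : ℕ∞) s y‖)
        (fun x y : ℚ_[p] => ‖Upsilon D ⊤ s x - Upsilon D ⊤ s y‖)
      < 4 * Real.pi * (p : ℝ) ^ (-(m : ℤ))
          / ((1 - ‖s‖) * (Delta D (m : ℕ∞) s + Delta D ⊤ s)) := by
  have hπ := Real.pi_pos
  have hp1 : (1:ℝ) < p := one_lt_p' p
  have hsne : s ≠ 0 := fun h => by simp [h] at hs0
  have hK1 : (0:ℝ) < 1 - ‖s‖ := by linarith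
  set K := ‖s‖ with hKdef
  set Sd : ℝ := Delta D (m : ℕ∞) s + Delta D ⊤ s with hSd
  set B : ℝ := 4 * Real.pi * (p : ℝ) ^ (-(m : ℤ)) / ((1 - K) * Sd) with hB
  set B' : ℝ := (4 * Real.pi / p * (p:ℝ) ^ (-(m:ℤ))) * (1 - K)⁻¹ / Sd with hB'
  have hppow : (0:ℝ) < (p:ℝ) ^ (-(m:ℤ)) := by positivity
  have hB'pos : 0 ≤ B' := by positivity
  have hBpos : 0 < B := by positivity
  -- pointwise bound
  have hpoint : ∀ q : ℚ_[p] × ℚ_[p],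
      |‖Upsilon D (m : ℕ∞) s q.1 - Upsilon D (m : ℕ∞) s q.2‖
          - ‖Upsilon D ⊤ s q.1 - Upsilon D ⊤ s q.2‖|
        / (‖Upsilon D (m : ℕ∞) s q.1 - Upsilon D (m : ℕ∞) s q.2‖
          + ‖Upsilon D ⊤ s q.1 - Upsilon D ⊤ s q.2‖) ≤ B' := by
    rintro ⟨x, y⟩
    by_cases hxy : x = y
    · subst hxy
      simp [hB'pos]
    · set z := x - y with hz
      have hzne : z ≠ 0 := sub_ne_zero.mpr hxy
      set v : ℤ := z.valuation with hv
      have hpQne : (p : ℚ_[p]) ≠ 0 := by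
        exact_mod_cast (Nat.Prime.ne_zero (Fact.out : p.Prime))
      set x' : ℚ_[p] := (p : ℚ_[p]) ^ (-v) * x with hx'
      set y' : ℚ_[p] := (p : ℚ_[p]) ^ (-v) * y with hy'
      have hxx : x = (p : ℚ_[p]) ^ v * x' := by
        rw [hx', ← mul_assoc, ← zpow_add₀ hpQne]
        simp
      have hyy : y = (p : ℚ_[p]) ^ v * y' := by
        rw [hy', ← mul_assoc, ← zpow_add₀ hpQne]
        simp
      have hnorm1 : ‖x' - y'‖ = 1 := by
        have hsub : x' - y' = (p : ℚ_[p]) ^ (-v) * z := by rw [hx', hy', hz]; ring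
        rw [hsub, norm_mul, norm_zpow, Padic.norm_p, Padic.norm_eq_zpow_neg_valuation hzne, ← hv,
          inv_zpow, ← zpow_neg, neg_neg]
        rw [← zpow_add₀ (by positivity : (p:ℝ) ≠ 0)]
        simp
      -- scaling
      have hscale1 : Upsilon D (m:ℕ∞) s x - Upsilon D (m:ℕ∞) s y
          = s ^ v * (Upsilon D (m:ℕ∞) s x' - Upsilon D (m:ℕ∞) s y') := by
        rw [hxx, hyy]; exact D.upsilon_scaling hsne hs1 (m:ℕ∞) x' y' v
      have hscale2 : Upsilon D ⊤ s x - Upsilon D ⊤ s y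
          = s ^ v * (Upsilon D ⊤ s x' - Upsilon D ⊤ s y') := by
        rw [hxx, hyy]; exact D.upsilon_scaling hsne hs1 ⊤ x' y' v
      set A' : ℂ := Upsilon D (m:ℕ∞) s x' - Upsilon D (m:ℕ∞) s y' with hA'
      set B'' : ℂ := Upsilon D ⊤ s x' - Upsilon D ⊤ s y' with hB''
      have hKv : (0:ℝ) < K ^ v := by positivity
      have habs1 : ‖Upsilon D (m:ℕ∞) s x - Upsilon D (m:ℕ∞) s y‖
          = K ^ v * ‖A'‖ := by rw [hscale1, norm_mul, norm_zpow]
      have habs2 : ‖Upsilon D ⊤ s x - Upsilon D ⊤ s y‖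
          = K ^ v * ‖B''‖ := by rw [hscale2, norm_mul, norm_zpow]
      rw [habs1, habs2, ← mul_sub, ← mul_add, abs_mul, abs_of_pos hKv]
      -- numerator bound
      have hnum : |‖A'‖ - ‖B''‖|
          ≤ (4 * Real.pi / p * (p:ℝ) ^ (-(m:ℤ))) * (1 - K)⁻¹ := by
        calc |‖A'‖ - ‖B''‖| ≤ ‖A' - B''‖ :=
              abs_norm_sub_norm_le _ _
          _ ≤ _ := D.w_bound hsne hs1 m (le_of_eq hnorm1)
      -- denominator bound
      have hden : Sd ≤ ‖A'‖ + ‖B''‖ :=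
        add_le_add (D.delta_le (m:ℕ∞) s hnorm1) (D.delta_le ⊤ s hnorm1)
      have hdenpos : (0:ℝ) < Sd := hΔ
      calc K ^ v * |‖A'‖ - ‖B''‖| / (K ^ v * (‖A'‖ + ‖B''‖))
          = |‖A'‖ - ‖B''‖| / (‖A'‖ + ‖B''‖) := by
            rw [mul_div_mul_left _ _ (ne_of_gt hKv)]
        _ ≤ ((4 * Real.pi / p * (p:ℝ) ^ (-(m:ℤ))) * (1 - K)⁻¹) / Sd := by
            apply div_le_div₀ (by positivity) hnum hdenpos hden
        _ = B' := rfl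
  -- conclude
  have hsup : divergence
      (fun x y : ℚ_[p] => ‖Upsilon D (m : ℕ∞) s x - Upsilon D (m : ℕ∞) s y‖)
      (fun x y : ℚ_[p] => ‖Upsilon D ⊤ s x - Upsilon D ⊤ s y‖) ≤ B' :=
    ciSup_le hpoint
  refine lt_of_le_of_lt hsup ?_
  have hBeq : B' = B * (p:ℝ)⁻¹ := by
    rw [hB', hB]
    field_simp
  rw [hBeq]
  calc B * (p:ℝ)⁻¹ < B * 1 := by
        apply mul_lt_mul_of_pos_left _ hBpos
        rw [inv_lt_one_iff₀]; right; exact hp1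
    _ = B := mul_one B
end
end

section
/- Let p be a prime and s ∈ ℂ with |s| < 1. For every fixed x ∈ ℤ_p, the function t ↦ ω_s^{(∞)}(t,x) from ℝ to ℂ is differentiable at every t ∈ ℝ, with derivative (d/dt) ω_s^{(∞)}(t,x) = (2πi/p)·ω_{s/p}^{(∞)}(t,x). -/
open scoped ENNReal MeasureTheory

noncomputable section

variable {p : ℕ} [Fact p.Prime]

/-- `ω_s^{(∞)}(ξ,x) = Σ_{n≥0} sⁿ exp(2πiξ/p^{n+1}) χ_n^{(∞)}(x)` on `ℝ × ℤ_p`. -/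
def omegaInf (D : PadicDigits p) (s : ℂ) (ξ : ℝ) (x : ℤ_[p]) : ℂ :=
  ∑' n : ℕ, s ^ n * Complex.exp (((2 * Real.pi * ξ : ℝ) : ℂ) * Complex.I / (p : ℂ) ^ (n + 1))
    * chiFn D ⊤ (x : ℚ_[p]) n

/-- For fixed `x ∈ ℤ_p`, the map `t ↦ ω_s^{(∞)}(t,x)` is differentiable on `ℝ` with
`(d/dt) ω_s^{(∞)}(t,x) = (2πi/p)·ω_{s/p}^{(∞)}(t,x)`. -/
theorem omegaInf_hasDerivAt {p : ℕ} [Fact p.Prime] (D : PadicDigits p)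
    (s : ℂ) (hs : ‖s‖ < 1) (x : ℤ_[p]) (t : ℝ) :
    HasDerivAt (fun u : ℝ => omegaInf D s u x)
      (2 * Real.pi * Complex.I / (p : ℂ) * omegaInf D (s / (p : ℂ)) t x) t := by
  have hp : (1 : ℝ) < p := Nat.one_lt_cast.mpr (Fact.out : p.Prime).one_lt
  have hp0 : (p : ℂ) ≠ 0 := by
    exact_mod_cast Nat.cast_ne_zero.mpr (Fact.out : p.Prime).ne_zero
  set a : ℕ → ℂ := fun n => 2 * Real.pi * Complex.I / (p : ℂ) ^ (n + 1) with ha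
  set g : ℕ → ℝ → ℂ := fun n u =>
    s ^ n * Complex.exp (a n * u) * chiFn D ⊤ (x : ℚ_[p]) n with hg
  set g' : ℕ → ℝ → ℂ := fun n u =>
    s ^ n * (Complex.exp (a n * u) * a n) * chiFn D ⊤ (x : ℚ_[p]) n with hg'
  have habs : ∀ n, ‖chiFn D ⊤ (x : ℚ_[p]) n‖ = 1 := fun n =>
    Complex.norm_exp_ofReal_mul_I _
  have hderiv : ∀ n u, HasDerivAt (g n) (g' n u) u := by
    intro n u
    have h1 : HasDerivAt (fun u : ℝ => a n * (u : ℂ)) (a n) u := by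
      simpa using (Complex.ofRealCLM.hasDerivAt (x := u)).const_mul (a n)
    simpa [hg, hg', mul_assoc, mul_comm, mul_left_comm] using
      ((h1.cexp.const_mul (s ^ n)).mul_const (chiFn D ⊤ (x : ℚ_[p]) n))
  have hpow : ∀ n : ℕ, ‖(p : ℂ) ^ (n + 1)‖ ≥ 1 := by
    intro n
    rw [norm_pow, Complex.norm_natCast]
    exact one_le_pow₀ hp.le
  have hp0' : (p:ℝ) ≠ 0 := by positivity
  have haeq : ∀ (n : ℕ) (u : ℝ),
      a n * u = ((2 * Real.pi * u / (p : ℝ) ^ (n + 1) : ℝ) : ℂ) * Complex.I := by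
    intro n u
    have hpn : ((p : ℂ) ^ (n + 1)) ≠ 0 := pow_ne_zero _ hp0
    simp only [ha]
    push_cast
    field_simp
  have hexp : ∀ (n : ℕ) (u : ℝ), ‖Complex.exp (a n * u)‖ = 1 := by
    intro n u
    rw [haeq]
    exact Complex.norm_exp_ofReal_mul_I _
  have hAbsA : ∀ n : ℕ, ‖a n‖ = 2 * Real.pi / (p : ℝ) ^ (n + 1) := by
    intro n
    simp only [ha, norm_div, norm_mul, Complex.norm_I, Complex.norm_ofNat, norm_pow,
      Complex.norm_real, Real.norm_eq_abs, Complex.norm_natCast, abs_of_pos Real.pi_pos, mul_one]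
  have hbound : ∀ n u, ‖g' n u‖ ≤ ‖s‖ ^ n * (2 * Real.pi) := by
    intro n u
    have hnorm : ‖g' n u‖ = ‖s‖ ^ n * (2 * Real.pi / (p : ℝ) ^ (n + 1)) := by
      simp only [hg', norm_mul, norm_pow, hexp n u, habs n,
        hAbsA n, one_mul, mul_one]
    rw [hnorm]
    have h1 : 2 * Real.pi / (p : ℝ) ^ (n + 1) ≤ 2 * Real.pi := by
      rw [div_le_iff₀ (by positivity)]
      nlinarith [one_le_pow₀ (n := n + 1) hp.le, Real.pi_pos]
    exact mul_le_mul_of_nonneg_left h1 (by positivity)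
  have hsum : Summable fun n => ‖s‖ ^ n * (2 * Real.pi) :=
    (summable_geometric_of_lt_one (norm_nonneg s) hs).mul_right _
  have hsum0 : Summable fun n => g n t := by
    apply Summable.of_norm
    have heq : ∀ n, ‖g n t‖ = ‖s‖ ^ n := by
      intro n
      simp [hg, norm_mul, norm_pow, hexp n t, habs n]
    simp only [heq]
    exact summable_geometric_of_lt_one (norm_nonneg s) hs
  have key := hasDerivAt_tsum hsum hderiv hbound hsum0 t
  have hfun : (fun u : ℝ => omegaInf D s u x) = fun u : ℝ => ∑' n, g n u := by
    funext u
    unfold omegaInf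
    congr 1
    funext n
    congr 2
    simp only [ha]
    push_cast
    ring
  have hval : ∑' n, g' n t =
      2 * Real.pi * Complex.I / (p : ℂ) * omegaInf D (s / (p : ℂ)) t x := by
    unfold omegaInf
    rw [← tsum_mul_left]
    apply tsum_congr
    intro n
    have hpn : ((p : ℂ) ^ (n + 1)) ≠ 0 := pow_ne_zero _ hp0
    simp only [hg', ha, div_pow]
    have : ((2 * Real.pi * t : ℝ) : ℂ) = 2 * Real.pi * t := by push_cast; ring
    rw [this]
    field_simp
    ring
  rw [hfun, ← hval]
  exact key
end
end
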